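/- arXiv:math/0601638 — 5 statements merged into one kernel-verified Lean document; each statement's English description precedes it below -/
import Mathlib

section
/- Let P be a d-polytope in Euclidean d-space (ℝ^d with the Euclidean norm) such that the Euclidean length of each edge of P equals the Euclidean diameter of P. Then P is a d-simplex all of whose pairwise vertex distances are equal (an equilateral d-simplex); in particular P has exactly d+1 vertices. -/
open Pointwise

/-- `N` is a norm on the real vector space `E`. -/
def IsNorm {E : Type*} [AddCommGroup E] [Module ℝ E] (N : E → ℝ) : Prop :=
  (∀ x, N x = 0 ↔ x = 0) ∧ (∀ (a : ℝ) (x : E), N (a • x) = |a| * N x) ∧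
  (∀ x y, N (x + y) ≤ N x + N y)

/-- The segment `[x, y]` is an edge (a 1-dimensional face) of `P`. -/
def IsEdge {E : Type*} [AddCommGroup E] [Module ℝ E] (P : Set E) (x y : E) : Prop :=
  x ≠ y ∧ IsExtreme ℝ P (segment ℝ x y)

/-- The diameter of a set `P` with respect to the norm `N`. -/
noncomputable def polyDiam {E : Type*} [AddCommGroup E] (N : E → ℝ) (P : Set E) : ℝ :=
  sSup {r | ∃ x ∈ P, ∃ y ∈ P, N (x - y) = r}

/-- The minimum pairwise distance of a finite set `V` with respect to the norm `N`. -/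
noncomputable def minPairDist {E : Type*} [AddCommGroup E] (N : E → ℝ) (V : Finset E) : ℝ :=
  sInf {r | ∃ x ∈ V, ∃ y ∈ V, x ≠ y ∧ N (x - y) = r}

/-- The functional `λ(V; N) = diam(V) / min pairwise distance`. -/
noncomputable def lamV {E : Type*} [AddCommGroup E] (N : E → ℝ) (V : Finset E) : ℝ :=
  polyDiam N (V : Set E) / minPairDist N V

/-- `P` is subequilateral with respect to `N`: every edge has length the diameter of `P`. -/
def Subequilateral {E : Type*} [AddCommGroup E] [Module ℝ E] (N : E → ℝ) (P : Set E) : Prop :=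
  ∀ x y, IsEdge P x y → N (x - y) = polyDiam N P

/-- There are two parallel hyperplanes, one through `x` and one through `y`, such that `P`
lies in the closed slab bounded by them. -/
def InSlab {E : Type*} [AddCommGroup E] [Module ℝ E] (P : Set E) (x y : E) : Prop :=
  ∃ f : E →ₗ[ℝ] ℝ, f ≠ 0 ∧ ∀ z ∈ P, min (f x) (f y) ≤ f z ∧ f z ≤ max (f x) (f y)

/-- `P` is edge-antipodal. -/
def EdgeAntipodal {E : Type*} [AddCommGroup E] [Module ℝ E] (P : Set E) : Prop :=
  ∀ x y, IsEdge P x y → InSlab P x y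

/-- `P` is antipodal. -/
def Antipodal {E : Type*} [AddCommGroup E] [Module ℝ E] (P : Set E) : Prop :=
  ∀ x ∈ Set.extremePoints ℝ P, ∀ y ∈ Set.extremePoints ℝ P, x ≠ y → InSlab P x y

/-- The relative norm determined by `P`, i.e. the norm with unit ball `P - P`. -/
noncomputable def relNorm {E : Type*} [AddCommGroup E] [Module ℝ E] (P : Set E) : E → ℝ :=
  gauge (P - P)

/-!
At a vertex `u` of a polytope `P`, the cone generated by `P - u` is salient and finitely
generated, hence spanned by generators of extreme rays, and the extreme rays run along the edges
of `P` at `u`. So `w - u` is a nonnegative combination `∑ aᵢ (yᵢ - u)` of edge vectors for every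
`w ∈ P`, and when every edge has length `D = diam P`, any two edge vectors at `u` have inner
product at least `D² / 2`.

Suppose a closest pair of distinct vertices `u, w` has distance `δ < D`. With `A = ∑ aᵢ` and
`B = ∑ bⱼ` for the expansions of `w - u` at `u` and of `u - w` at `w`, the bound above gives
`D² A² ≤ 2δ²` and `D² B² ≤ 2δ²`, while expanding `⟪w - u, u - w⟫ = -δ²` and using minimality of
`δ` gives `2δ² ≤ (D² - δ²) A B`. Together these force `δ = 0`. So the vertices are pairwise at
distance `D`; an equilateral set is affinely independent, and a full-dimensional polytope with
affinely independent vertices is a simplex.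
-/

theorem ConvexCone.Salient.eq_zero_of_add_eq_zero {R E : Type*} [Semiring R] [PartialOrder R]
    [AddCommGroup E] [SMul R E] {C : ConvexCone R E} (hC : C.Salient) {x y : E} (hx : x ∈ C)
    (hy : y ∈ C) (hxy : x + y = 0) : x = 0 := by
  by_contra hx0
  exact hC x hx hx0 (by rwa [← eq_neg_of_add_eq_zero_right hxy])

namespace PointedCone

variable {E : Type*} [AddCommGroup E] [Module ℝ E]

theorem isFaceOf_hull_insert_of_notMem_hull {s : Set E} {e : E}
    (hsal : (hull ℝ (insert e s)).toConvexCone.Salient) (he : e ∉ hull ℝ s) :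
    (hull ℝ {e}).IsFaceOf (hull ℝ (insert e s)) := by
  have hsC : hull ℝ s ≤ hull ℝ (insert e s) := Submodule.span_mono (Set.subset_insert e s)
  refine .of_mem_of_add_mem_left (Submodule.span_mono (by simp)) fun {x y} hx hy hxy => ?_
  obtain ⟨a, x', hx', rfl⟩ := Submodule.mem_span_insert.1 hx
  obtain ⟨b, y', hy', rfl⟩ := Submodule.mem_span_insert.1 hy
  obtain ⟨r, hr⟩ := Submodule.mem_span_singleton.1 hxy
  -- Only `a + b = r` survives: otherwise `±e ∈ hull s`. Then salience gives `x' = 0`.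
  have key : ((a : ℝ) + b - r) • e + (x' + y') = 0 := by
    simp only [← Nonneg.coe_smul] at hr
    rw [sub_smul, add_smul, hr]; abel
  rcases lt_trichotomy ((a : ℝ) + b - r) 0 with hc | hc | hc
  · refine absurd ?_ he
    have : e = (-((a : ℝ) + b - r))⁻¹ • (x' + y') := by
      rw [eq_inv_smul_iff₀ (by linarith), neg_smul, neg_eq_iff_eq_neg, ← add_eq_zero_iff_eq_neg,
        key]
    rw [this]
    exact (hull ℝ s).smul_mem (inv_nonneg.2 (by linarith)) (add_mem hx' hy')
  · rw [hc, zero_smul, zero_add] at key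
    rw [hsal.eq_zero_of_add_eq_zero (hsC hx') (hsC hy') key, add_zero]
    exact Submodule.smul_mem _ a (Submodule.mem_span_singleton_self e)
  · refine absurd ?_ he
    have hne : -e ∈ hull ℝ s := by
      have : -e = ((a : ℝ) + b - r)⁻¹ • (x' + y') := by
        rw [eq_inv_smul_iff₀ hc.ne', smul_neg, neg_eq_iff_eq_neg, ← add_eq_zero_iff_eq_neg, key]
      rw [this]
      exact (hull ℝ s).smul_mem (by positivity) (add_mem hx' hy')
    rw [hsal.eq_zero_of_add_eq_zero (Submodule.subset_span (Set.mem_insert e s)) (hsC hne)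
      (add_neg_cancel e)]
    exact zero_mem _

theorem exists_subset_hull_eq_forall_isFaceOf (X : Finset E)
    (hsal : (hull ℝ (X : Set E)).toConvexCone.Salient) :
    ∃ Y ⊆ X, hull ℝ (Y : Set E) = hull ℝ X ∧
      ∀ e ∈ Y, e ≠ 0 ∧ (hull ℝ {e}).IsFaceOf (hull ℝ (X : Set E)) := by
  classical
  obtain ⟨Y, hY, hmin⟩ := (X.powerset.filter fun Y : Finset E => hull ℝ (Y : Set E) = hull ℝ X
    ).exists_min_image Finset.card ⟨X, by simp⟩
  simp only [Finset.mem_filter, Finset.mem_powerset] at hY hmin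
  have hYe : ∀ e ∈ Y, insert e ((Y.erase e : Finset E) : Set E) = Y := fun e he => by
    rw [← Finset.coe_insert, Finset.insert_erase he]
  have hnotMem : ∀ e ∈ Y, e ∉ hull ℝ ((Y.erase e : Finset E) : Set E) := by
    intro e he hmem
    have heq : hull ℝ ((Y.erase e : Finset E) : Set E) = hull ℝ X := by
      rw [← hY.2, ← hYe e he]
      exact (Submodule.span_insert_eq_span hmem).symm
    exact (Finset.card_erase_lt_of_mem he).not_ge
      (hmin _ ⟨(Y.erase_subset e).trans hY.1, heq⟩)
  refine ⟨Y, hY.1, hY.2, fun e he => ⟨fun h => hnotMem e he (h ▸ zero_mem _), ?_⟩⟩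
  rw [← hY.2, ← hYe e he] at hsal ⊢
  exact isFaceOf_hull_insert_of_notMem_hull hsal (hnotMem e he)

theorem exists_eq_sum_smul_sub_of_mem_hull_image_sub {T : Set E} {u x : E}
    (hx : x ∈ hull ℝ ((· - u) '' T)) :
    ∃ (s : Finset E) (a : E → ℝ), (∀ y ∈ s, 0 ≤ a y ∧ y ∈ T) ∧ x = ∑ y ∈ s, a y • (y - u) := by
  classical
  obtain ⟨c, hcT, hc0, rfl⟩ := mem_hull_set.1 hx
  refine ⟨c.support.image (· + u), fun y => c (y - u), ?_, ?_⟩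
  · simp only [Finset.mem_image]
    rintro _ ⟨m, hm, rfl⟩
    obtain ⟨y, hy, rfl⟩ := hcT hm
    simpa using ⟨hc0 _, hy⟩
  · rw [Finset.sum_image fun _ _ _ _ => add_right_cancel, Finsupp.sum]
    simp

end PointedCone

section Extreme

variable {𝕜 E F : Type*} [Ring 𝕜] [PartialOrder 𝕜] [IsOrderedRing 𝕜]
  [AddCommGroup E] [Module 𝕜 E] [AddCommGroup F] [Module 𝕜 F]

theorem IsExtreme.inter_preimage_affineMap (f : E →ᵃ[𝕜] F) {A : Set E} {B C : Set F}
    (hBC : IsExtreme 𝕜 B C) (hAB : Set.MapsTo f A B) : IsExtreme 𝕜 A (A ∩ f ⁻¹' C) := by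
  refine ⟨Set.inter_subset_left, fun x₁ hx₁ x₂ hx₂ x hx hxs => ?_⟩
  have hfx : f x ∈ openSegment 𝕜 (f x₁) (f x₂) := by
    rw [← image_openSegment]; exact Set.mem_image_of_mem f hxs
  exact ⟨hx₁, hBC.2 (hAB hx₁) (hAB hx₂) hx.2 hfx⟩

theorem AffineMap.mem_extremePoints_image {f : E →ᵃ[𝕜] F} (hf : Function.Injective f)
    {A : Set E} {x : E} (hx : x ∈ A.extremePoints 𝕜) : f x ∈ (f '' A).extremePoints 𝕜 := by
  refine ⟨Set.mem_image_of_mem f hx.1, ?_⟩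
  rintro _ ⟨x₁, hx₁, rfl⟩ _ ⟨x₂, hx₂, rfl⟩ hxs
  rw [← image_openSegment, hf.mem_set_image] at hxs
  rw [hx.2 hx₁ hx₂ hxs]

end Extreme

section Real

variable {E : Type*} [AddCommGroup E] [Module ℝ E]

theorem right_mem_extremePoints_segment (x y : E) : y ∈ (segment ℝ x y).extremePoints ℝ := by
  rcases eq_or_ne x y with rfl | hxy
  · simp
  · rw [segment_eq_image_lineMap]
    simpa using AffineMap.mem_extremePoints_image (AffineMap.lineMap_injective ℝ hxy)
      (x := 1) (by simp)

theorem IsEdge.right_mem_extremePoints {P : Set E} {x y : E} (h : IsEdge P x y) :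
    y ∈ P.extremePoints ℝ :=
  h.2.extremePoints_subset_extremePoints (right_mem_extremePoints_segment x y)

theorem salient_hull_sub_image_of_mem_extremePoints {P : Set E} (hPc : Convex ℝ P) {u : E}
    (hu : u ∈ P.extremePoints ℝ) :
    (PointedCone.hull ℝ ((· - u) '' P)).toConvexCone.Salient := by
  have hS : Convex ℝ ((· - u) '' P) := by
    simpa only [sub_eq_neg_add] using hPc.translate (-u)
  set S := (· - u) '' P
  have hpt : (ConvexCone.hull ℝ S).Pointed := ConvexCone.subset_hull ⟨u, hu.1, sub_self u⟩
  refine ConvexCone.Salient.anti (C₁ := ConvexCone.hull ℝ S) (fun x hx => ?_) ?_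
  · exact (Submodule.span_le (p := (ConvexCone.hull ℝ S).toPointedCone hpt)).2
      ConvexCone.subset_hull hx
  intro x hx hx0 hnx
  rw [ConvexCone.mem_hull_of_convex hS] at hx hnx
  obtain ⟨r, hr, _, ⟨p, hp, rfl⟩, rfl⟩ := hx
  obtain ⟨r', hr', _, ⟨q, hq, rfl⟩, hq'⟩ := hnx
  have hu_mem : u ∈ openSegment ℝ p q := by
    refine ⟨r / (r + r'), r' / (r + r'), by positivity, by positivity, by field_simp, ?_⟩
    have : r • (p - u) + r' • (q - u) = 0 := by
      beta_reduce at hq'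
      rw [hq', add_neg_cancel]
    rw [div_eq_inv_mul, div_eq_inv_mul, mul_smul, mul_smul, ← smul_add,
      inv_smul_eq_iff₀ (by positivity)]
    linear_combination (norm := module) this
  apply hx0
  simp [hu.2 hp hq hu_mem]

end Real

section Normed

variable {E : Type*} [NormedAddCommGroup E] [NormedSpace ℝ E]

theorem exists_segment_eq_inter_ray {P : Set E} (hPc : Convex ℝ P) (hPk : IsCompact P) {u e : E}
    (hu : u ∈ P) (he : u + e ∈ P) (he0 : e ≠ 0) :
    ∃ r : ℝ, 0 < r ∧ {z ∈ P | z - u ∈ PointedCone.hull ℝ {e}} = segment ℝ u (u + r • e) := by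
  set A : Set ℝ := Set.Ici 0 ∩ (fun s : ℝ => u + s • e) ⁻¹' P
  have hA : IsCompact A :=
    (((Homeomorph.addLeft u).isClosedEmbedding.comp
      (isClosedEmbedding_smul_left he0)).isCompact_preimage hPk).inter_left isClosed_Ici
  have h1A : (1 : ℝ) ∈ A := ⟨Set.mem_Ici.2 zero_le_one, by simpa using he⟩
  obtain ⟨r, ⟨-, hrP⟩, hrmax⟩ := hA.exists_isGreatest ⟨1, h1A⟩
  have hr : 0 < r := zero_lt_one.trans_le (hrmax h1A)
  refine ⟨r, hr, Set.Subset.antisymm ?_ ?_⟩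
  · rintro z ⟨hz, hze⟩
    obtain ⟨s, hs, hsz⟩ : ∃ s : ℝ, 0 ≤ s ∧ s • e = z - u := by
      simpa [Submodule.mem_span_singleton] using hze
    have hsr : s ≤ r := hrmax ⟨hs, by simpa [hsz] using hz⟩
    rw [segment_eq_image']
    refine ⟨s / r, ⟨by positivity, div_le_one_of_le₀ hsr hr.le⟩, ?_⟩
    simp only [add_sub_cancel_left, smul_smul, div_mul_cancel₀ _ hr.ne', hsz, add_sub_cancel]
  · intro z hz
    refine ⟨hPc.segment_subset hu hrP hz, ?_⟩
    rw [segment_eq_image'] at hz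
    obtain ⟨θ, ⟨hθ, -⟩, rfl⟩ := hz
    rw [add_sub_cancel_left, add_sub_cancel_left, smul_smul]
    exact (PointedCone.hull ℝ {e}).smul_mem (by positivity) (Submodule.subset_span rfl)

theorem exists_isEdge_of_isFaceOf {P : Set E} (hPc : Convex ℝ P) (hPk : IsCompact P) {u e : E}
    {C : PointedCone ℝ E} (hPC : ∀ z ∈ P, z - u ∈ C) (hF : (PointedCone.hull ℝ {e}).IsFaceOf C)
    (hu : u ∈ P) (he : u + e ∈ P) (he0 : e ≠ 0) :
    ∃ y, IsEdge P u y ∧ e ∈ PointedCone.hull ℝ {y - u} := by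
  obtain ⟨r, hr, hseg⟩ := exists_segment_eq_inter_ray hPc hPk hu he he0
  refine ⟨u + r • e, ⟨by simpa [hr.ne'] using he0, ?_⟩, ?_⟩
  · rw [← hseg]
    exact hF.isExtreme.inter_preimage_affineMap (AffineEquiv.vaddConst ℝ u).symm.toAffineMap
      hPC
  · rw [add_sub_cancel_left]
    simpa [smul_smul, hr.ne'] using (PointedCone.hull ℝ {r • e}).smul_mem
      (inv_nonneg.2 hr.le) (Submodule.subset_span rfl)

theorem sub_mem_hull_edge_directions {V : Finset E} {P : Set E}
    (hP : P = convexHull ℝ (V : Set E)) {u w : E} (hu : u ∈ P.extremePoints ℝ) (hw : w ∈ P) :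
    w - u ∈ PointedCone.hull ℝ ((· - u) '' {y | IsEdge P u y}) := by
  classical
  have hPc : Convex ℝ P := hP ▸ convex_convexHull ℝ _
  have hPk : IsCompact P := hP ▸ V.finite_toSet.isCompact_convexHull (𝕜 := ℝ)
  have hVP : (V : Set E) ⊆ P := hP ▸ subset_convexHull ℝ _
  set X := V.image (· - u)
  have hPX : ∀ z ∈ P, z - u ∈ PointedCone.hull ℝ (X : Set E) := by
    have hconv : Convex ℝ ((· - u) ⁻¹' (PointedCone.hull ℝ (X : Set E) : Set E)) := by
      simpa only [sub_eq_neg_add] using (PointedCone.convex _).translate_preimage_right (-u)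
    rw [hP]
    exact convexHull_min (fun v hv => Submodule.subset_span
      (Finset.mem_coe.2 (Finset.mem_image_of_mem _ hv))) hconv
  have hsal : (PointedCone.hull ℝ (X : Set E)).toConvexCone.Salient :=
    (salient_hull_sub_image_of_mem_extremePoints hPc hu).anti
      (Submodule.span_mono (by simpa [X] using Set.image_mono hVP))
  obtain ⟨Y, hYX, hYX', hY⟩ := PointedCone.exists_subset_hull_eq_forall_isFaceOf X hsal
  refine Submodule.span_le.2 (fun e he => ?_) (hYX' ▸ hPX w hw)
  obtain ⟨he0, hF⟩ := hY e he
  have heP : u + e ∈ P := by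
    obtain ⟨v, hv, rfl⟩ := Finset.mem_image.1 (hYX he)
    simpa using hVP hv
  obtain ⟨y, hy, hey⟩ := exists_isEdge_of_isFaceOf hPc hPk hPX hF hu.1 heP he0
  exact Submodule.span_mono (by simpa using hy) hey

theorem Set.Finite.convexHull_extremePoints_convexHull {V : Set E} (hV : V.Finite) :
    convexHull ℝ ((convexHull ℝ V).extremePoints ℝ) = convexHull ℝ V := by
  have hext : ((convexHull ℝ V).extremePoints ℝ).Finite :=
    hV.subset extremePoints_convexHull_subset
  rw [← (hext.isCompact_convexHull (𝕜 := ℝ)).isClosed.closure_eq]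
  exact closure_convexHull_extremePoints (hV.isCompact_convexHull (𝕜 := ℝ))
    (convex_convexHull ℝ V)

theorem exists_sub_eq_sum_of_subequilateral {V : Finset E} {P : Set E}
    (hP : P = convexHull ℝ (V : Set E)) (hsub : ∀ x y, IsEdge P x y → dist x y = Metric.diam P)
    {u w : E} (hu : u ∈ P.extremePoints ℝ) (hw : w ∈ P) :
    ∃ (s : Finset E) (a : E → ℝ),
      (∀ y ∈ s, 0 ≤ a y ∧ y ∈ P.extremePoints ℝ ∧ dist y u = Metric.diam P) ∧
        w - u = ∑ y ∈ s, a y • (y - u) := by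
  obtain ⟨s, a, hs, hsum⟩ := PointedCone.exists_eq_sum_smul_sub_of_mem_hull_image_sub
    (sub_mem_hull_edge_directions hP hu hw)
  exact ⟨s, a, fun y hy => ⟨(hs y hy).1, (hs y hy).2.right_mem_extremePoints,
    dist_comm y u ▸ hsub u y (hs y hy).2⟩, hsum⟩

end Normed

section InnerProduct

open RealInnerProductSpace EuclideanGeometry

variable {E : Type*} [NormedAddCommGroup E] [InnerProductSpace ℝ E]

theorem two_mul_inner_sub_sub (a b c d : E) :
    2 * ⟪a - b, c - d⟫ = dist a d ^ 2 + dist b c ^ 2 - dist a c ^ 2 - dist b d ^ 2 := by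
  simp only [dist_eq_norm, norm_sub_sq_real, inner_sub_left, inner_sub_right]
  ring

theorem mul_sum_mul_sum_le_inner_sum_smul {ι κ : Type*} {s : Finset ι} {t : Finset κ}
    {a : ι → ℝ} {b : κ → ℝ} {v : ι → E} {w : κ → E} {c : ℝ}
    (ha : ∀ i ∈ s, 0 ≤ a i) (hb : ∀ j ∈ t, 0 ≤ b j) (h : ∀ i ∈ s, ∀ j ∈ t, c ≤ ⟪v i, w j⟫) :
    c * (∑ i ∈ s, a i) * (∑ j ∈ t, b j) ≤ ⟪∑ i ∈ s, a i • v i, ∑ j ∈ t, b j • w j⟫ := by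
  rw [sum_inner, Finset.mul_sum s a c, Finset.sum_mul]
  refine Finset.sum_le_sum fun i hi => ?_
  rw [real_inner_smul_left, inner_sum, Finset.mul_sum, Finset.mul_sum]
  refine Finset.sum_le_sum fun j hj => ?_
  rw [real_inner_smul_right]
  nlinarith [mul_nonneg (ha i hi) (hb j hj), h i hi j hj]

theorem sq_mul_sum_sq_le_two_mul_dist_sq {ι : Type*} {s : Finset ι} {a : ι → ℝ} {y : ι → E}
    {u w : E} {D : ℝ} (ha : ∀ i ∈ s, 0 ≤ a i) (hwu : w - u = ∑ i ∈ s, a i • (y i - u))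
    (hyu : ∀ i ∈ s, dist (y i) u = D) (hyy : ∀ i ∈ s, ∀ j ∈ s, dist (y i) (y j) ≤ D) :
    D ^ 2 * (∑ i ∈ s, a i) ^ 2 ≤ 2 * dist u w ^ 2 := by
  have := mul_sum_mul_sum_le_inner_sum_smul (c := D ^ 2 / 2) (v := fun i => y i - u)
    (w := fun i => y i - u) ha ha fun i hi j hj => by
    have := two_mul_inner_sub_sub (y i) u (y j) u
    rw [dist_self, hyu i hi, dist_comm, hyu j hj] at this
    nlinarith [pow_le_pow_left₀ dist_nonneg (hyy i hi j hj) 2]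
  rw [← hwu, real_inner_self_eq_norm_sq, ← dist_eq_norm, dist_comm] at this
  linarith

theorem eq_of_dist_lt_of_sub_eq_sum {ι κ : Type*} {s : Finset ι} {t : Finset κ}
    {a : ι → ℝ} {b : κ → ℝ} {y : ι → E} {z : κ → E} {K : Set E} {u w : E} {D : ℝ}
    (ha : ∀ i ∈ s, 0 ≤ a i) (hb : ∀ j ∈ t, 0 ≤ b j)
    (hwu : w - u = ∑ i ∈ s, a i • (y i - u)) (huw : u - w = ∑ j ∈ t, b j • (z j - w))
    (hK : ∀ p ∈ K, ∀ q ∈ K, dist p q ≤ D) (hyK : ∀ i ∈ s, y i ∈ K) (hzK : ∀ j ∈ t, z j ∈ K)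
    (hyu : ∀ i ∈ s, dist (y i) u = D) (hzw : ∀ j ∈ t, dist (z j) w = D)
    (hyw : ∀ i ∈ s, dist u w ≤ dist (y i) w) (hzu : ∀ j ∈ t, dist u w ≤ dist (z j) u)
    (hlt : dist u w < D) : u = w := by
  set δ := dist u w
  have hδ : 0 ≤ δ := dist_nonneg
  have hA := sq_mul_sum_sq_le_two_mul_dist_sq ha hwu hyu fun i hi j hj =>
    hK _ (hyK i hi) _ (hyK j hj)
  have hB := sq_mul_sum_sq_le_two_mul_dist_sq hb huw hzw fun i hi j hj =>
    hK _ (hzK i hi) _ (hzK j hj)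
  rw [dist_comm w u] at hB
  have hAB : (δ ^ 2 - D ^ 2) / 2 * (∑ i ∈ s, a i) * (∑ j ∈ t, b j) ≤ -δ ^ 2 := by
    have := mul_sum_mul_sum_le_inner_sum_smul (c := (δ ^ 2 - D ^ 2) / 2)
      (v := fun i => y i - u) (w := fun j => z j - w) ha hb fun i hi j hj => by
      have := two_mul_inner_sub_sub (y i) u (z j) w
      rw [dist_comm u (z j)] at this
      nlinarith [pow_le_pow_left₀ dist_nonneg (hK _ (hyK i hi) _ (hzK j hj)) 2, hyw i hi, hzu j hj]
    rwa [← hwu, ← huw, ← neg_sub w u, inner_neg_right, real_inner_self_eq_norm_sq,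
      ← dist_eq_norm, dist_comm] at this
  set A := ∑ i ∈ s, a i
  set B := ∑ j ∈ t, b j
  have hA0 : 0 ≤ A := Finset.sum_nonneg ha
  have hB0 : 0 ≤ B := Finset.sum_nonneg hb
  have hX : D ^ 2 * A * B / 2 ≤ δ ^ 2 := by
    nlinarith [mul_le_mul hA hB (by positivity) (by positivity)]
  have h1 : D ^ 2 * δ ^ 2 ≤ (D ^ 2 - δ ^ 2) * (D ^ 2 * A * B / 2) := by nlinarith
  have h2 : (D ^ 2 - δ ^ 2) * (D ^ 2 * A * B / 2) ≤ (D ^ 2 - δ ^ 2) * δ ^ 2 :=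
    mul_le_mul_of_nonneg_left hX (by nlinarith)
  have h3 : δ ^ 2 * δ ^ 2 = 0 := le_antisymm (by nlinarith) (mul_self_nonneg _)
  exact dist_eq_zero.1 (pow_eq_zero_iff two_ne_zero |>.1 (mul_self_eq_zero.1 h3))

theorem affineIndependent_of_pairwise_dist_eq {ι : Type*} [Fintype ι] {p : ι → E} {D : ℝ}
    (hp : Function.Injective p) (h : Pairwise fun i j => dist (p i) (p j) = D) :
    AffineIndependent ℝ p := by
  classical
  rw [affineIndependent_iff_of_fintype]
  intro w hw0 hw i
  by_cases hD : D = 0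
  · have hi : ∀ j, j ≠ i → w j = 0 := fun j hji =>
      absurd (hp (dist_eq_zero.1 ((h hji).trans hD))) hji
    rwa [Finset.sum_eq_single i (fun j _ => hi j) (by simp)] at hw0
  have hterm : ∀ j k, w j * w k * (dist (p j) (p k) * dist (p j) (p k)) =
      D ^ 2 * (w j * w k) - if j = k then D ^ 2 * w j ^ 2 else 0 := by
    intro j k
    rcases eq_or_ne j k with rfl | hjk
    · simp; ring
    · rw [h hjk, if_neg hjk]; ring
  have key := inner_weightedVSub p hw0 p hw0
  simp only [hw, inner_zero_left, hterm, Finset.sum_sub_distrib, ← Finset.mul_sum,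
    ← Finset.sum_mul, hw0, Finset.sum_ite_eq, Finset.mem_univ, if_true] at key
  have hsq : ∑ j, w j ^ 2 = 0 := by
    have : D ^ 2 * ∑ j, w j ^ 2 = 0 := by linarith
    exact (mul_eq_zero.1 this).resolve_left (pow_ne_zero 2 hD)
  exact pow_eq_zero_iff two_ne_zero |>.1
    ((Finset.sum_eq_zero_iff_of_nonneg fun j _ => sq_nonneg (w j)).1 hsq i (Finset.mem_univ i))

theorem dist_eq_diam_of_mem_extremePoints {V : Finset E} {P : Set E}
    (hP : P = convexHull ℝ (V : Set E)) (hsub : ∀ x y, IsEdge P x y → dist x y = Metric.diam P)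
    {u w : E} (hu : u ∈ P.extremePoints ℝ) (hw : w ∈ P.extremePoints ℝ) (huw : u ≠ w) :
    dist u w = Metric.diam P := by
  classical
  have hPb : Bornology.IsBounded P := (hP ▸ V.finite_toSet.isCompact_convexHull (𝕜 := ℝ)).isBounded
  have hfin : (P.extremePoints ℝ).Finite :=
    V.finite_toSet.subset (hP ▸ extremePoints_convexHull_subset)
  obtain ⟨⟨u₀, w₀⟩, hmem, hmin⟩ := hfin.toFinset.offDiag.exists_min_image
    (fun p => dist p.1 p.2) ⟨(u, w), by simp [hu, hw, huw]⟩
  simp only [Finset.mem_offDiag, Set.Finite.mem_toFinset] at hmem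
  obtain ⟨hu₀, hw₀, hne⟩ := hmem
  have hclosest : ∀ p ∈ P.extremePoints ℝ, ∀ q ∈ P.extremePoints ℝ, p ≠ q →
      dist u₀ w₀ ≤ dist p q := fun p hp q hq hpq =>
    hmin (p, q) (by simp [hp, hq, hpq])
  refine le_antisymm (Metric.dist_le_diam_of_mem hPb hu.1 hw.1)
    (le_trans ?_ (hclosest u hu w hw huw))
  by_contra! hlt
  obtain ⟨s, a, hs, hwu⟩ := exists_sub_eq_sum_of_subequilateral hP hsub hu₀ hw₀.1
  obtain ⟨t, b, ht, huw₀⟩ := exists_sub_eq_sum_of_subequilateral hP hsub hw₀ hu₀.1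
  refine hne (eq_of_dist_lt_of_sub_eq_sum (fun y hy => (hs y hy).1) (fun z hz => (ht z hz).1)
    hwu huw₀ (fun p hp q hq => Metric.dist_le_diam_of_mem hPb hp hq)
    (fun y hy => (hs y hy).2.1.1) (fun z hz => (ht z hz).2.1.1) (fun y hy => (hs y hy).2.2)
    (fun z hz => (ht z hz).2.2) (fun y hy => ?_) (fun z hz => ?_) hlt)
  · refine hclosest y (hs y hy).2.1 w₀ hw₀ fun hyw => hlt.ne ?_
    rw [dist_comm, ← hyw, (hs y hy).2.2]
  · refine hclosest z (ht z hz).2.1 u₀ hu₀ fun hzu => hlt.ne ?_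
    rw [← hzu, (ht z hz).2.2]

end InnerProduct

/-- A `d`-polytope in Euclidean `d`-space all of whose edges have length equal
to the diameter of the polytope is an equilateral `d`-simplex; in particular it has exactly
`d + 1` vertices. -/
theorem euclidean_subequilateral_is_equilateral_simplex (d : ℕ)
    (V : Finset (EuclideanSpace ℝ (Fin d))) (P : Set (EuclideanSpace ℝ (Fin d)))
    (hP : P = convexHull ℝ (V : Set (EuclideanSpace ℝ (Fin d))))
    (hdim : affineSpan ℝ P = ⊤)
    (hsub : ∀ x y, IsEdge P x y → dist x y = Metric.diam P) :
    (∃ W : Finset (EuclideanSpace ℝ (Fin d)),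
        P = convexHull ℝ (W : Set (EuclideanSpace ℝ (Fin d))) ∧
        W.card = d + 1 ∧
        AffineIndependent ℝ (fun w : W => (w : EuclideanSpace ℝ (Fin d))) ∧
        ∀ x ∈ W, ∀ y ∈ W, x ≠ y → dist x y = Metric.diam P) ∧
      (Set.extremePoints ℝ P).ncard = d + 1 := by
  have hfin : (P.extremePoints ℝ).Finite :=
    V.finite_toSet.subset (hP ▸ extremePoints_convexHull_subset)
  set W := hfin.toFinset
  have hWP : (W : Set (EuclideanSpace ℝ (Fin d))) = P.extremePoints ℝ := hfin.coe_toFinset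
  have hPW : P = convexHull ℝ (W : Set (EuclideanSpace ℝ (Fin d))) := by
    rw [hWP, hP, V.finite_toSet.convexHull_extremePoints_convexHull]
  have hdist : ∀ x ∈ W, ∀ y ∈ W, x ≠ y → dist x y = Metric.diam P := fun x hx y hy hxy =>
    dist_eq_diam_of_mem_extremePoints hP hsub (hfin.mem_toFinset.1 hx) (hfin.mem_toFinset.1 hy) hxy
  have hind : AffineIndependent ℝ (fun w : W => (w : EuclideanSpace ℝ (Fin d))) :=
    affineIndependent_of_pairwise_dist_eq Subtype.val_injective fun x y hxy =>
      hdist x x.2 y y.2 (Subtype.coe_ne_coe.2 hxy)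
  have hcard : W.card = d + 1 := by
    have := hind.affineSpan_eq_top_iff_card_eq_finrank_add_one.1
      (by convert hdim using 1; rw [hPW, affineSpan_convexHull]; simp)
    simpa using this
  exact ⟨⟨W, hPW, hcard, hind, hdist⟩, by rw [← hWP, Set.ncard_coe_finset, hcard]⟩
end

section
/- Let ‖·‖ be a norm on ℝ^d and let V be a finite set in ℝ^d with at least two points. Then the number of elements of V satisfies |V| ≤ (λ(V; ‖·‖) + 1)^d. -/
/-! If `m` is the minimal distance in `V` and a convex body `C ⊇ V` has `N`-diameter less than
`δ`, then the homothets of `C` with ratio `t = m / (m + δ)` centred at the points of `V` lie in `C`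
and are pairwise disjoint, so comparing volumes gives `|V| t^d ≤ 1`, i.e.
`|V| ≤ (δ / m + 1)^d`. Taking for `C` the convex hull of `V` thickened by a small ball gives
this for every `δ > diam V`, and letting `δ` tend to `diam V` proves the bound. -/

open Pointwise

open MeasureTheory Module Set AffineMap Filter Topology

namespace IsNorm

variable {E : Type*} [AddCommGroup E] [Module ℝ E] {N : E → ℝ}

theorem map_zero (hN : IsNorm N) : N 0 = 0 := (hN.1 0).2 rfl

theorem map_neg (hN : IsNorm N) (x : E) : N (-x) = N x := by
  simpa using hN.2.1 (-1) x

theorem map_sub_comm (hN : IsNorm N) (x y : E) : N (x - y) = N (y - x) := by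
  rw [← neg_sub, hN.map_neg]

theorem nonneg (hN : IsNorm N) (x : E) : 0 ≤ N x := by
  have := hN.2.2 x (-x)
  rw [add_neg_cancel, hN.map_zero, hN.map_neg] at this
  linarith

theorem pos (hN : IsNorm N) {x : E} (hx : x ≠ 0) : 0 < N x :=
  (hN.nonneg x).lt_of_ne' fun h => hx ((hN.1 x).1 h)

theorem convexOn (hN : IsNorm N) : ConvexOn ℝ univ N :=
  ⟨convex_univ, fun x _ y _ a b ha hb _ => by
    simpa [hN.2.1, abs_of_nonneg ha, abs_of_nonneg hb] using hN.2.2 (a • x) (b • y)⟩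

theorem sub_le_of_mem_convexHull (hN : IsNorm N) {s : Set E} {D : ℝ}
    (hs : ∀ x ∈ s, ∀ y ∈ s, N (x - y) ≤ D) {a b : E} (ha : a ∈ convexHull ℝ s)
    (hb : b ∈ convexHull ℝ s) : N (a - b) ≤ D := by
  have hconv (c : E) : ConvexOn ℝ univ fun x => N (x - c) := by
    simpa [Function.comp_def, sub_eq_neg_add] using hN.convexOn.translate_right (-c)
  obtain ⟨x, hx, hax⟩ := (hconv b).exists_ge_of_mem_convexHull (subset_univ s) ha
  obtain ⟨y, hy, hbx⟩ := (hconv x).exists_ge_of_mem_convexHull (subset_univ s) hb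
  calc N (a - b) ≤ N (x - b) := hax
    _ = N (b - x) := hN.map_sub_comm x b
    _ ≤ N (y - x) := hbx
    _ ≤ D := hs y hy x hx

theorem sub_le_of_mem_add (hN : IsNorm N) {s B : Set E} {D η : ℝ}
    (hs : ∀ x ∈ s, ∀ y ∈ s, N (x - y) ≤ D) (hB : ∀ b ∈ B, N b ≤ η) :
    ∀ x ∈ s + B, ∀ y ∈ s + B, N (x - y) ≤ D + 2 * η := by
  rintro _ ⟨x, hx, b, hb, rfl⟩ _ ⟨y, hy, c, hc, rfl⟩
  calc N (x + b - (y + c)) = N ((x - y) + (b + -c)) := by abel_nf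
    _ ≤ N (x - y) + (N b + N (-c)) := (hN.2.2 _ _).trans (by gcongr; exact hN.2.2 _ _)
    _ ≤ D + 2 * η := by linarith [hs x hx y hy, hB b hb, hN.map_neg c ▸ hB c hc]

theorem pairwiseDisjoint_image_homothety (hN : IsNorm N) {V C : Set E} {m δ t : ℝ}
    (hV : ∀ x ∈ V, ∀ y ∈ V, x ≠ y → m ≤ N (x - y)) (hC : ∀ x ∈ C, ∀ y ∈ C, N (x - y) ≤ δ)
    (ht₀ : 0 ≤ t) (ht₁ : t ≤ 1) (hlt : t * δ < (1 - t) * m) :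
    V.PairwiseDisjoint fun v => homothety v t '' C := by
  intro u hu v hv huv
  refine Set.disjoint_left.2 ?_
  rintro _ ⟨c, hc, rfl⟩ ⟨c', hc', h⟩
  simp only [homothety_apply, vsub_eq_sub, vadd_eq_add] at h
  have hsmul : (1 - t) • (u - v) = t • (c' - c) := by
    linear_combination (norm := module) -h
  have hnorm : (1 - t) * N (u - v) = t * N (c' - c) := by
    simpa [hN.2.1, abs_of_nonneg ht₀, abs_of_nonneg (sub_nonneg.2 ht₁)] using
      congrArg N hsmul
  nlinarith [hV u hu v hv huv, hC c' hc' c hc]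

end IsNorm

theorem IsNorm.exists_pos_le_mul_norm {d : ℕ} {N : (Fin d → ℝ) → ℝ} (hN : IsNorm N) :
    ∃ c : ℝ, 0 < c ∧ ∀ x, N x ≤ c * ‖x‖ := by
  set e : Fin d → Fin d → ℝ := fun i j => if i = j then 1 else 0
  have hsum : 0 ≤ ∑ i, N (e i) := Finset.sum_nonneg fun i _ => hN.nonneg _
  refine ⟨∑ i, N (e i) + 1, by linarith, fun x => ?_⟩
  calc N x = N (∑ i, x i • e i) := congrArg N (pi_eq_sum_univ x)
    _ ≤ ∑ i, N (x i • e i) :=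
        Finset.le_sum_of_subadditive N hN.map_zero.le hN.2.2 _ _
    _ = ∑ i, |x i| * N (e i) := by simp only [hN.2.1]
    _ ≤ ∑ i, ‖x‖ * N (e i) := by
        gcongr with i
        · exact hN.nonneg _
        · exact norm_le_pi_norm x i
    _ ≤ (∑ i, N (e i) + 1) * ‖x‖ := by
        rw [← Finset.mul_sum, mul_comm]
        gcongr
        linarith

theorem Convex.image_homothety_subset {E : Type*} [AddCommGroup E] [Module ℝ E] {C : Set E}
    (hC : Convex ℝ C) {v : E} (hv : v ∈ C) {t : ℝ} (ht₀ : 0 ≤ t) (ht₁ : t ≤ 1) :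
    homothety v t '' C ⊆ C := by
  rintro _ ⟨c, hc, rfl⟩
  rw [homothety_eq_lineMap]
  exact hC.lineMap_mem hv hc ⟨ht₀, ht₁⟩

theorem Convex.card_mul_pow_finrank_le_one {E : Type*} [NormedAddCommGroup E] [NormedSpace ℝ E]
    [MeasurableSpace E] [BorelSpace E] [FiniteDimensional ℝ E] (μ : Measure E)
    [μ.IsAddHaarMeasure] {C : Set E} (hC : Convex ℝ C) (hCc : IsCompact C) (hC₀ : μ C ≠ 0)
    {V : Finset E} (hVC : ↑V ⊆ C) {t : ℝ} (ht₀ : 0 ≤ t) (ht₁ : t ≤ 1)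
    (hdisj : (V : Set E).PairwiseDisjoint fun v => homothety v t '' C) :
    (V.card : ℝ) * t ^ finrank ℝ E ≤ 1 := by
  have hmeas (v : E) : MeasurableSet (homothety v t '' C) :=
    (hCc.image (homothety_continuous v t)).isClosed.measurableSet
  have hpack : ENNReal.ofReal (V.card * t ^ finrank ℝ E) * μ C ≤ 1 * μ C := calc
    _ = ∑ v ∈ V, μ (homothety v t '' C) := by
        simp [Measure.addHaar_image_homothety, abs_of_nonneg (pow_nonneg ht₀ _),
          ENNReal.ofReal_mul, mul_assoc]
    _ = μ (⋃ v ∈ V, homothety v t '' C) :=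
        (measure_biUnion_finset hdisj fun v _ => hmeas v).symm
    _ ≤ μ C := measure_mono <| iUnion₂_subset fun v hv =>
        hC.image_homothety_subset (hVC hv) ht₀ ht₁
    _ = 1 * μ C := (one_mul _).symm
  exact ENNReal.ofReal_le_one.1
    ((ENNReal.mul_le_mul_iff_left hC₀ hCc.measure_lt_top.ne).1 hpack)

section PairDistances

variable {E : Type*} [AddCommGroup E] {N : E → ℝ}

theorem sub_le_polyDiam {P : Set E} (hP : P.Finite) {x y : E} (hx : x ∈ P) (hy : y ∈ P) :
    N (x - y) ≤ polyDiam N P :=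
  le_csSup (hP.image2 _ hP).bddAbove ⟨x, hx, y, hy, rfl⟩

theorem finite_pairDist (V : Finset E) :
    {r | ∃ x ∈ V, ∃ y ∈ V, x ≠ y ∧ N (x - y) = r}.Finite :=
  (V.finite_toSet.image2 (fun x y => N (x - y)) V.finite_toSet).subset
    fun _ ⟨x, hx, y, hy, _, hr⟩ => ⟨x, hx, y, hy, hr⟩

theorem minPairDist_le {V : Finset E} {x y : E} (hx : x ∈ V) (hy : y ∈ V) (hxy : x ≠ y) :
    minPairDist N V ≤ N (x - y) :=
  csInf_le (finite_pairDist V).bddBelow ⟨x, hx, y, hy, hxy, rfl⟩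

theorem IsNorm.minPairDist_pos [Module ℝ E] (hN : IsNorm N) {V : Finset E} (hV : 1 < V.card) :
    0 < minPairDist N V := by
  obtain ⟨x, hx, y, hy, hxy⟩ := Finset.one_lt_card.1 hV
  obtain ⟨u, -, v, -, huv, h⟩ : minPairDist N V ∈ {r | ∃ x ∈ V, ∃ y ∈ V, x ≠ y ∧ N (x - y) = r} :=
    Set.Nonempty.csInf_mem ⟨_, x, hx, y, hy, hxy, rfl⟩ (finite_pairDist V)
  rw [← h]
  exact hN.pos (sub_ne_zero.2 huv)

end PairDistances

-- `conv V` may be flat; thickening it gives positive volume at the cost of a larger diameter.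
theorem IsNorm.exists_convex_isCompact_superset {d : ℕ} {N : (Fin d → ℝ) → ℝ} (hN : IsNorm N)
    {V : Finset (Fin d → ℝ)} (hV : V.Nonempty) {D η : ℝ}
    (hdiam : ∀ x ∈ V, ∀ y ∈ V, N (x - y) ≤ D) (hη : 0 < η) :
    ∃ C : Set (Fin d → ℝ), Convex ℝ C ∧ IsCompact C ∧ ↑V ⊆ C ∧ volume C ≠ 0 ∧
      ∀ x ∈ C, ∀ y ∈ C, N (x - y) ≤ D + η := by
  obtain ⟨x₀, hx₀⟩ := hV
  obtain ⟨c, hc, hNc⟩ := hN.exists_pos_le_mul_norm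
  set ρ := η / (2 * c)
  have hρ : 0 < ρ := by positivity
  have hball : ∀ b ∈ Metric.closedBall (0 : Fin d → ℝ) ρ, N b ≤ η / 2 := fun b hb =>
    calc N b ≤ c * ‖b‖ := hNc b
      _ ≤ c * ρ := by gcongr; exact mem_closedBall_zero_iff.1 hb
      _ = η / 2 := by simp only [ρ]; field_simp
  set C := convexHull ℝ (V : Set (Fin d → ℝ)) + Metric.closedBall 0 ρ
  refine ⟨C, (convex_convexHull ℝ _).add (convex_closedBall _ ρ),
    (V.finite_toSet.isCompact_convexHull ℝ).add (isCompact_closedBall _ ρ), fun v hv =>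
    ⟨v, subset_convexHull ℝ _ hv, 0, Metric.mem_closedBall_self hρ.le, add_zero v⟩, ?_, ?_⟩
  · refine (measure_mono fun z hz => ?_).trans_lt' (Metric.measure_closedBall_pos _ x₀ hρ) |>.ne'
    exact ⟨x₀, subset_convexHull ℝ _ hx₀, z - x₀, by simpa [dist_eq_norm] using hz,
      add_sub_cancel x₀ z⟩
  · intro x hx y hy
    have := hN.sub_le_of_mem_add (fun x hx y hy => hN.sub_le_of_mem_convexHull hdiam hx hy)
      hball x hx y hy
    linarith

theorem IsNorm.card_le_div_add_one_pow {d : ℕ} {N : (Fin d → ℝ) → ℝ} (hN : IsNorm N)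
    {V : Finset (Fin d → ℝ)} (hV : V.Nonempty) {m D δ : ℝ} (hm : 0 < m)
    (hsep : ∀ x ∈ V, ∀ y ∈ V, x ≠ y → m ≤ N (x - y))
    (hdiam : ∀ x ∈ V, ∀ y ∈ V, N (x - y) ≤ D) (hδ : D < δ) :
    (V.card : ℝ) ≤ (δ / m + 1) ^ d := by
  obtain ⟨C, hC, hCc, hVC, hC₀, hCdiam⟩ :=
    hN.exists_convex_isCompact_superset hV hdiam (half_pos (sub_pos.2 hδ))
  have hD : 0 ≤ D := by
    obtain ⟨x₀, hx₀⟩ := hV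
    simpa [hN.map_zero] using hdiam x₀ hx₀ x₀ hx₀
  have hmδ : 0 < m + δ := by linarith
  set t := m / (m + δ)
  have ht₀ : 0 < t := div_pos hm hmδ
  have ht₁ : t ≤ 1 := div_le_one_of_le₀ (by linarith) hmδ.le
  have htm : (1 - t) * m = t * δ := by simp only [t]; field_simp; ring
  have hdisj := hN.pairwiseDisjoint_image_homothety hsep hCdiam ht₀.le ht₁ <| by
    rw [htm]
    exact mul_lt_mul_of_pos_left (by linarith) ht₀
  have hpack := hC.card_mul_pow_finrank_le_one volume hCc hC₀ hVC ht₀.le ht₁ hdisj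
  rw [finrank_fin_fun] at hpack
  calc (V.card : ℝ) ≤ 1 / t ^ d := by rwa [le_div_iff₀ (by positivity)]
    _ = (δ / m + 1) ^ d := by
      rw [one_div, ← inv_pow, inv_div, add_div, div_self hm.ne', add_comm]

/-- Lemma 2: For a finite set `V` with at least two points in a `d`-dimensional
normed space, `|V| ≤ (λ(V; N) + 1)^d`. -/
theorem card_le_lam_pow (d : ℕ) (N : (Fin d → ℝ) → ℝ) (hN : IsNorm N)
    (V : Finset (Fin d → ℝ)) (hV : 2 ≤ V.card) :
    (V.card : ℝ) ≤ (lamV N V + 1) ^ d := by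
  rw [lamV]
  set m := minPairDist N V
  set D := polyDiam N (V : Set (Fin d → ℝ))
  have hm : 0 < m := hN.minPairDist_pos hV
  have hbound : ∀ δ > D, (V.card : ℝ) ≤ (δ / m + 1) ^ d := fun δ hδ =>
    hN.card_le_div_add_one_pow (Finset.card_pos.1 (by omega)) hm
      (fun x hx y hy hxy => minPairDist_le hx hy hxy)
      (fun x hx y hy => sub_le_polyDiam V.finite_toSet hx hy) hδ
  have hlim : Tendsto (fun δ => (δ / m + 1) ^ d) (𝓝[>] D) (𝓝 ((D / m + 1) ^ d)) :=
    ((continuous_id.div_const m).add continuous_const |>.pow d).continuousAt.tendsto.mono_left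
      nhdsWithin_le_nhds
  exact ge_of_tendsto hlim (eventually_nhdsWithin_of_forall hbound)
end

section
/- Let ‖·‖ be a norm on ℝ^d, let x, z_1, …, z_d ∈ ℝ^d satisfy ‖x − z_i‖ = 1 for all i = 1, …, d and ‖z_i − z_j‖ ≤ 1 for all i, j, and let x' be a convex combination of z_1, …, z_d (i.e., x' = Σ λ_i z_i with λ_i ≥ 0 and Σ λ_i = 1). Then ‖x − x'‖ ≥ 1/d. -/
open Pointwise

/-- If `‖x - z i‖ = 1` for all `i`, `‖z i - z j‖ ≤ 1` for all `i, j`, and `x'`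
is a convex combination of `z 1, …, z d`, then `‖x - x'‖ ≥ 1/d`. -/
theorem dist_to_convex_combination (d : ℕ) (N : (Fin d → ℝ) → ℝ) (hN : IsNorm N)
    (x x' : Fin d → ℝ) (z : Fin d → (Fin d → ℝ)) (l : Fin d → ℝ)
    (hxz : ∀ i, N (x - z i) = 1)
    (hzz : ∀ i j, N (z i - z j) ≤ 1)
    (hl : ∀ i, 0 ≤ l i) (hlsum : ∑ i, l i = 1)
    (hx' : x' = ∑ i, l i • z i) :
    1 / (d : ℝ) ≤ N (x - x') := by
  obtain ⟨h0, hsmul, hadd⟩ := hN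
  have hN0 : N 0 = 0 := (h0 0).mpr rfl
  have hsumle : ∀ {ι : Type} (s : Finset ι) (f : ι → Fin d → ℝ),
      N (∑ i ∈ s, f i) ≤ ∑ i ∈ s, N (f i) := by
    intro ι s f
    induction s using Finset.cons_induction with
    | empty => simp [hN0]
    | cons a s ha ih =>
      rw [Finset.sum_cons, Finset.sum_cons]
      exact le_trans (hadd _ _) (by linarith)
  have hd : d ≠ 0 := by
    rintro rfl
    simp at hlsum
  have hdpos : (0:ℝ) < d := by positivity
  obtain ⟨i, -, hi⟩ : ∃ i ∈ Finset.univ, 1/(d:ℝ) ≤ l i := by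
    by_contra h
    push_neg at h
    have : ∑ i : Fin d, l i < ∑ _i : Fin d, 1/(d:ℝ) := by
      apply Finset.sum_lt_sum_of_nonempty
      · exact Finset.univ_nonempty_iff.mpr ⟨⟨0, Nat.pos_of_ne_zero hd⟩⟩
      · intro j _; exact h j (Finset.mem_univ j)
    rw [hlsum, Finset.sum_const, Finset.card_univ, Fintype.card_fin] at this
    rw [nsmul_eq_mul, mul_one_div, div_self (ne_of_gt hdpos)] at this
    exact lt_irrefl 1 this
  have hrepr : x' - z i = ∑ j : Fin d, l j • (z j - z i) := by
    simp only [smul_sub, Finset.sum_sub_distrib, ← Finset.sum_smul, hlsum, one_smul, hx']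
  have hbound : N (x' - z i) ≤ 1 - l i := by
    rw [hrepr]
    calc N (∑ j : Fin d, l j • (z j - z i)) ≤ ∑ j : Fin d, N (l j • (z j - z i)) :=
          hsumle _ _
      _ = ∑ j : Fin d, l j * N (z j - z i) := by
          refine Finset.sum_congr rfl fun j _ => ?_
          rw [hsmul, abs_of_nonneg (hl j)]
      _ ≤ ∑ j : Fin d, (if j = i then 0 else l j) := by
          refine Finset.sum_le_sum fun j _ => ?_
          by_cases hji : j = i
          · simp [hji, sub_self, hN0]
          · simp only [if_neg hji]
            nlinarith [hl j, hzz j i]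
      _ = (∑ j : Fin d, l j) - l i := by
          have hli : l i = ∑ j : Fin d, if j = i then l i else 0 := by simp
          rw [eq_sub_iff_add_eq, hli, ← Finset.sum_add_distrib]
          refine Finset.sum_congr rfl fun j _ => ?_
          by_cases hji : j = i <;> simp [hji]
      _ = 1 - l i := by rw [hlsum]
  have h1 : (1:ℝ) = N (x - z i) := (hxz i).symm
  have htri : N (x - z i) ≤ N (x - x') + N (x' - z i) := by
    have := hadd (x - x') (x' - z i)
    simpa using this
  linarith
end

section
/- Let d ≥ 2, let e_1, …, e_{d+1} be the standard basis of ℝ^{d+1}, let X = {(x_1, …, x_{d+1}) ∈ ℝ^{d+1} : Σ_{i=1}^d x_i = 0} equipped with the ℓ_1 norm ‖(x_1, …, x_{d+1})‖_1 = Σ_{i=1}^{d+1} |x_i|, let c = Σ_{i=1}^d e_i, and let V = {d·e_i − c : i = 1, …, d} ∪ {2e_{d+1}, −2e_{d+1}}. Then V is the vertex set of a d-polytope P in X, all pairwise ℓ_1-distances between distinct points of V equal 2d except the distance between 2e_{d+1} and −2e_{d+1}, which equals 4; moreover P is subequilateral with respect to the ℓ_1 norm and λ(V; ‖·‖_1)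 = d/2. -/
/-!
Each point of `V` is the unique maximiser over `V` of a coordinate functional (`x_i` for
`d·e_i − c`, `±x_{d+1}` for `±2e_{d+1}`), hence a vertex of `P`. The `ℓ_1` distances between
points of `V` are computed coordinatewise; since `ℓ_1` balls are convex, `diam P = diam V = 2d`.
The only pair of vertices at distance `≠ 2d` is `±2e_{d+1}`, and their segment is not an edge:
its midpoint `0` is also the centroid of the simplex `conv {d·e_i − c}`, so any face containing
it contains the whole simplex. Finally `0 ∈ aff V`, so the direction of `aff V` is `span V`,
which is the hyperplane `Σ_{i ≤ d} x_i = 0` of `ℝ^{d+1}`.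
-/

open Pointwise

section ExtremePoints

variable {𝕜 E : Type*} [Field 𝕜] [LinearOrder 𝕜] [IsStrictOrderedRing 𝕜]
  [AddCommGroup E] [Module 𝕜 E] {s : Set E} {x y : E}

theorem eq_of_mem_convexHull_insert_of_le {f : E →ₗ[𝕜] 𝕜} (hf : ∀ z ∈ s, f z < f x)
    (hy : y ∈ convexHull 𝕜 (insert x s)) (hxy : f x ≤ f y) : y = x := by
  rcases s.eq_empty_or_nonempty with rfl | hs
  · simpa using hy
  rw [convexHull_insert hs, mem_convexJoin] at hy
  obtain ⟨x', hx', z, hz, a, b, ha, hb, hab, rfl⟩ := hy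
  rw [Set.mem_singleton_iff] at hx'
  subst x'
  have hfz : f z < f x := convexHull_min hf (convex_halfSpace_lt f.isLinear _) hz
  have hb0 : b = 0 := by
    simp only [map_add, map_smul, smul_eq_mul] at hxy
    have hx_eq : f x = a * f x + b * f x := by rw [← add_mul, hab, one_mul]
    nlinarith
  simp [hb0, show a = 1 by linarith]

theorem mem_extremePoints_convexHull_of_lt {f : E →ₗ[𝕜] 𝕜} (hx : x ∈ s)
    (hf : ∀ z ∈ s, z ≠ x → f z < f x) : x ∈ (convexHull 𝕜 s).extremePoints 𝕜 := by
  have hmax : ∀ y ∈ convexHull 𝕜 s, f y ≤ f x := by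
    refine convexHull_min (fun z hz => ?_) (convex_halfSpace_le f.isLinear _)
    rcases eq_or_ne z x with rfl | hzx
    · exact le_rfl
    · exact (hf z hz hzx).le
  have hunique : ∀ y ∈ convexHull 𝕜 s, f x ≤ f y → y = x := fun y hy =>
    eq_of_mem_convexHull_insert_of_le (s := s \ {x}) (fun z hz => hf z hz.1 hz.2)
      (by rwa [Set.insert_sdiff_singleton, Set.insert_eq_of_mem hx])
  refine mem_extremePoints.2 ⟨subset_convexHull 𝕜 s hx, ?_⟩
  rintro a ha b hb ⟨t, u, ht, hu, htu, hab⟩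
  have hfx : f x = t * f a + u * f b := by simp [← hab]
  have ha' := hmax a ha
  have hb' := hmax b hb
  have hx_eq : f x = t * f x + u * f x := by rw [← add_mul, htu, one_mul]
  refine ⟨hunique a ha ?_, hunique b hb ?_⟩
  · nlinarith [mul_le_mul_of_nonneg_left hb' hu.le]
  · nlinarith [mul_le_mul_of_nonneg_left ha' ht.le]

theorem left_mem_extremePoints_segment (hxy : x ≠ y) : x ∈ (segment 𝕜 x y).extremePoints 𝕜 := by
  obtain ⟨f, hf⟩ := Module.Projective.exists_dual_ne_zero 𝕜 (sub_ne_zero.2 hxy)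
  rw [map_sub] at hf
  rw [← convexHull_pair]
  rcases lt_or_gt_of_ne hf with h | h
  · refine mem_extremePoints_convexHull_of_lt (f := -f) (Set.mem_insert x {y}) ?_
    rintro z (rfl | rfl) hz
    · exact absurd rfl hz
    · simpa [sub_neg] using h
  · refine mem_extremePoints_convexHull_of_lt (f := f) (Set.mem_insert x {y}) ?_
    rintro z (rfl | rfl) hz
    · exact absurd rfl hz
    · simpa [sub_pos] using h

end ExtremePoints

theorem direction_affineSpan_of_zero_mem {k V : Type*} [Ring k] [AddCommGroup V] [Module k V]
    {s : Set V} (h : (0 : V) ∈ affineSpan k s) :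
    (affineSpan k s).direction = Submodule.span k s := by
  rw [← affineSpan_insert_eq_affineSpan k h, direction_affineSpan,
    vectorSpan_eq_span_vsub_set_right k (Set.mem_insert 0 s)]
  simp

section Diameter

variable {E : Type*} [AddCommGroup E] [Module ℝ E] {s : Set E}

theorem Seminorm.sub_le_of_mem_convexHull (p : Seminorm ℝ E) {r : ℝ}
    (h : ∀ x ∈ s, ∀ y ∈ s, p (x - y) ≤ r) :
    ∀ x ∈ convexHull ℝ s, ∀ y ∈ convexHull ℝ s, p (x - y) ≤ r := by
  have hball : ∀ y, s ⊆ p.closedBall y r → convexHull ℝ s ⊆ p.closedBall y r :=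
    fun y hs => convexHull_min hs (p.convex_closedBall y r)
  intro x hx y hy
  have hsx : s ⊆ p.closedBall x r := by
    refine fun z hz => p.mem_closedBall.2 ?_
    rw [map_sub_rev]
    exact hball z (fun w hw => p.mem_closedBall.2 (h w hw z hz)) hx
  simpa [map_sub_rev] using p.mem_closedBall.1 (hball x hsx hy)

theorem polyDiam_convexHull (p : Seminorm ℝ E) {D : ℝ}
    (h : IsGreatest {r | ∃ x ∈ s, ∃ y ∈ s, p (x - y) = r} D) :
    polyDiam p (convexHull ℝ s) = D := by
  refine IsGreatest.csSup_eq ⟨?_, ?_⟩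
  · obtain ⟨x, hx, y, hy, hxy⟩ := h.1
    exact ⟨x, subset_convexHull ℝ s hx, y, subset_convexHull ℝ s hy, hxy⟩
  · rintro r ⟨x, hx, y, hy, rfl⟩
    exact p.sub_le_of_mem_convexHull (fun x hx y hy => h.2 ⟨x, hx, y, hy, rfl⟩) x hx y hy

end Diameter

section L1

def l1Seminorm (ι : Type*) [Fintype ι] : Seminorm ℝ (ι → ℝ) :=
  Seminorm.of (fun x => ∑ i, |x i|)
    (fun x y => by simpa [← Finset.sum_add_distrib] using
      Finset.sum_le_sum fun i _ => abs_add_le (x i) (y i))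
    (fun a x => by simp [abs_mul, Finset.mul_sum])

variable {ι : Type*} [Fintype ι]

theorem l1Seminorm_apply (x : ι → ℝ) : l1Seminorm ι x = ∑ i, |x i| := rfl

variable [DecidableEq ι]

theorem l1Seminorm_single (i : ι) (t : ℝ) : l1Seminorm ι (Pi.single i t) = |t| := by
  rw [l1Seminorm_apply, Finset.sum_eq_single i] <;> simp_all

theorem l1Seminorm_single_sub_single {i j : ι} (hij : i ≠ j) :
    l1Seminorm ι (Pi.single i 1 - Pi.single j 1) = 2 := by
  rw [l1Seminorm_apply, Fintype.sum_eq_add i j hij]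
  · norm_num [hij, hij.symm]
  · rintro k ⟨hki, hkj⟩
    simp [hki, hkj]

end L1

namespace TalataL1

variable {d : ℕ}

variable (d) in
def simplexVertex (i : Fin d) : Fin (d + 1) → ℝ :=
  (d : ℝ) • Pi.single i.castSucc 1 - ∑ j : Fin d, Pi.single j.castSucc 1

variable (d) in
def apex : Fin (d + 1) → ℝ := (2 : ℝ) • Pi.single (Fin.last d) 1

variable (d) in
def vertexSet : Set (Fin (d + 1) → ℝ) := Set.range (simplexVertex d) ∪ {apex d, -apex d}

variable (d) in
def headSum : (Fin (d + 1) → ℝ) →ₗ[ℝ] ℝ := ∑ j : Fin d, LinearMap.proj j.castSucc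

local notation "ℓ₁" => l1Seminorm (Fin (d + 1))

theorem simplexVertex_castSucc (i j : Fin d) :
    simplexVertex d i j.castSucc = if j = i then (d : ℝ) - 1 else -1 := by
  by_cases h : j = i <;> simp [simplexVertex, Pi.single_apply, Finset.sum_apply, h]

theorem simplexVertex_last (i : Fin d) : simplexVertex d i (Fin.last d) = 0 := by
  simp [simplexVertex, Finset.sum_apply, Fin.castSucc_ne_last]

theorem apex_castSucc (j : Fin d) : apex d j.castSucc = 0 := by
  simp [apex, Fin.castSucc_ne_last]

theorem apex_last : apex d (Fin.last d) = 2 := by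
  simp [apex]

theorem apex_ne_neg_apex : apex d ≠ -apex d := fun h => by
  have := congrFun h (Fin.last d)
  norm_num [apex_last] at this

theorem sum_simplexVertex : ∑ i, simplexVertex d i = 0 := by
  simp only [simplexVertex]
  rw [Finset.sum_sub_distrib, ← Finset.smul_sum, Finset.sum_const, Finset.card_univ,
    Fintype.card_fin, Nat.cast_smul_eq_nsmul, sub_self]

theorem simplexVertex_sub_simplexVertex (i j : Fin d) :
    simplexVertex d i - simplexVertex d j =
      (d : ℝ) • (Pi.single i.castSucc 1 - Pi.single j.castSucc 1) := by
  simp [simplexVertex, smul_sub]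

theorem sum_abs_simplexVertex_castSucc (hd : 1 ≤ d) (i : Fin d) :
    ∑ j : Fin d, |simplexVertex d i j.castSucc| = 2 * (d - 1) := by
  have hcoord : ∀ j, |simplexVertex d i j.castSucc| = 1 + if j = i then (d : ℝ) - 2 else 0 := by
    intro j
    have : (1 : ℝ) ≤ d := by exact_mod_cast hd
    rw [simplexVertex_castSucc]
    split_ifs
    · rw [abs_of_nonneg (by linarith)]
      ring
    · norm_num
  simp only [hcoord, Finset.sum_add_distrib, Finset.sum_ite_eq', Finset.mem_univ, if_true,
    Finset.sum_const, Finset.card_univ, Fintype.card_fin, nsmul_eq_mul, mul_one]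
  ring

theorem l1_simplexVertex_sub_simplexVertex {i j : Fin d} (hij : i ≠ j) :
    ℓ₁ (simplexVertex d i - simplexVertex d j) = 2 * d := by
  rw [simplexVertex_sub_simplexVertex, map_smul_eq_mul,
    l1Seminorm_single_sub_single (Fin.castSucc_injective _ |>.ne hij), Real.norm_natCast, mul_comm]

theorem l1_simplexVertex_sub_smul_apex (hd : 1 ≤ d) (i : Fin d) (t : ℝ) :
    ℓ₁ (simplexVertex d i - t • apex d) = 2 * (d - 1) + 2 * |t| := by
  rw [l1Seminorm_apply, Fin.sum_univ_castSucc]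
  simp only [Pi.sub_apply, Pi.smul_apply, smul_eq_mul, apex_castSucc, apex_last, mul_zero,
    sub_zero, sum_abs_simplexVertex_castSucc hd, simplexVertex_last, zero_sub, abs_neg, abs_mul,
    abs_two]
  ring

theorem l1_apex_sub_neg_apex : ℓ₁ (apex d - -apex d) = 4 := by
  rw [sub_neg_eq_add, ← two_smul ℝ, map_smul_eq_mul, apex, map_smul_eq_mul, l1Seminorm_single]
  norm_num

theorem l1_sub_of_mem_vertexSet (hd : 1 ≤ d) {x y : Fin (d + 1) → ℝ} (hx : x ∈ vertexSet d)
    (hy : y ∈ vertexSet d) (hxy : x ≠ y) (hne : ({x, y} : Set _) ≠ {apex d, -apex d}) :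
    ℓ₁ (x - y) = 2 * d := by
  have hsub : ∀ i (t : ℝ), |t| = 1 → ℓ₁ (simplexVertex d i - t • apex d) = 2 * d := by
    intro i t ht
    rw [l1_simplexVertex_sub_smul_apex hd, ht]
    ring
  have hapex : ∀ i, ℓ₁ (simplexVertex d i - apex d) = 2 * d := fun i => by
    simpa using hsub i 1 (by simp)
  have hneg : ∀ i, ℓ₁ (simplexVertex d i - -apex d) = 2 * d := fun i => by
    simpa using hsub i (-1) (by simp)
  rcases hx with ⟨i, rfl⟩ | rfl | rfl <;> rcases hy with ⟨j, rfl⟩ | rfl | rfl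
  · exact l1_simplexVertex_sub_simplexVertex fun h => hxy (h ▸ rfl)
  · exact hapex i
  · exact hneg i
  · rw [map_sub_rev]; exact hapex j
  · exact absurd rfl hxy
  · exact absurd rfl hne
  · rw [map_sub_rev]; exact hneg j
  · exact absurd (Set.pair_comm _ _) hne
  · exact absurd rfl hxy

theorem l1_sub_eq_four_or_of_mem_vertexSet (hd : 1 ≤ d) {x y : Fin (d + 1) → ℝ}
    (hx : x ∈ vertexSet d) (hy : y ∈ vertexSet d) (hxy : x ≠ y) :
    ℓ₁ (x - y) = 4 ∨ ℓ₁ (x - y) = 2 * d := by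
  by_cases hne : ({x, y} : Set _) = {apex d, -apex d}
  · left
    rcases Set.pair_eq_pair_iff.1 hne with ⟨rfl, rfl⟩ | ⟨rfl, rfl⟩
    · exact l1_apex_sub_neg_apex
    · rw [map_sub_rev]; exact l1_apex_sub_neg_apex
  · exact Or.inr (l1_sub_of_mem_vertexSet hd hx hy hxy hne)

theorem isGreatest_l1_vertexSet (hd : 2 ≤ d) :
    IsGreatest {r | ∃ x ∈ vertexSet d, ∃ y ∈ vertexSet d, ℓ₁ (x - y) = r} (2 * d) := by
  have hdR : (2 : ℝ) ≤ d := by exact_mod_cast hd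
  refine ⟨⟨_, Or.inl ⟨⟨0, by omega⟩, rfl⟩, _, Or.inl ⟨⟨1, by omega⟩, rfl⟩,
    l1_simplexVertex_sub_simplexVertex (by simp [Fin.ext_iff])⟩, ?_⟩
  rintro r ⟨x, hx, y, hy, rfl⟩
  rcases eq_or_ne x y with rfl | hxy
  · simp only [sub_self, map_zero]
    positivity
  · rcases l1_sub_eq_four_or_of_mem_vertexSet (by omega) hx hy hxy with h | h <;> linarith

theorem isLeast_l1_vertexSet (hd : 2 ≤ d) :
    IsLeast {r | ∃ x ∈ vertexSet d, ∃ y ∈ vertexSet d, x ≠ y ∧ ℓ₁ (x - y) = r} 4 := by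
  have hdR : (2 : ℝ) ≤ d := by exact_mod_cast hd
  refine ⟨⟨_, Or.inr (Or.inl rfl), _, Or.inr (Or.inr rfl), apex_ne_neg_apex,
    l1_apex_sub_neg_apex⟩, ?_⟩
  rintro r ⟨x, hx, y, hy, hxy, rfl⟩
  rcases l1_sub_eq_four_or_of_mem_vertexSet (by omega) hx hy hxy with h | h <;> linarith

theorem extremePoints_convexHull_vertexSet (hd : 2 ≤ d) :
    (convexHull ℝ (vertexSet d)).extremePoints ℝ = vertexSet d := by
  have hdR : (2 : ℝ) ≤ d := by exact_mod_cast hd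
  refine extremePoints_convexHull_subset.antisymm ?_
  rintro w (⟨i, rfl⟩ | rfl | rfl)
  · refine mem_extremePoints_convexHull_of_lt (f := LinearMap.proj i.castSucc)
      (Or.inl ⟨i, rfl⟩) ?_
    rintro z (⟨j, rfl⟩ | rfl | rfl) hz <;>
      simp only [LinearMap.proj_apply, Pi.neg_apply, simplexVertex_castSucc, apex_castSucc,
        ↓reduceIte, neg_zero]
    · rw [if_neg fun h : i = j => hz (by rw [h])]
      linarith
    all_goals linarith
  · refine mem_extremePoints_convexHull_of_lt (f := LinearMap.proj (Fin.last d))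
      (Or.inr (Or.inl rfl)) ?_
    rintro z (⟨j, rfl⟩ | rfl | rfl) hz <;> simp_all [simplexVertex_last, apex_last]
  · refine mem_extremePoints_convexHull_of_lt (f := -LinearMap.proj (Fin.last d))
      (Or.inr (Or.inr rfl)) ?_
    rintro z (⟨j, rfl⟩ | rfl | rfl) hz <;> simp_all [simplexVertex_last, apex_last]

theorem zero_mem_segment_apex : (0 : Fin (d + 1) → ℝ) ∈ segment ℝ (apex d) (-apex d) :=
  ⟨1 / 2, 1 / 2, by norm_num, by norm_num, by norm_num, by module⟩

/-- The centroid of the simplex vertices other than `simplexVertex d i`. -/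
theorem neg_inv_smul_simplexVertex_mem_convexHull (hd : 2 ≤ d) (i : Fin d) :
    -((d : ℝ) - 1)⁻¹ • simplexVertex d i ∈ convexHull ℝ (vertexSet d) := by
  have hd1 : (1 : ℝ) < d := by exact_mod_cast hd
  have hcard : ((Finset.univ.erase i).card : ℝ) = d - 1 := by
    rw [Finset.card_erase_of_mem (Finset.mem_univ _), Finset.card_univ, Fintype.card_fin,
      Nat.cast_sub (by omega), Nat.cast_one]
  have hsum : ∑ j ∈ Finset.univ.erase i, simplexVertex d j = -simplexVertex d i := by
    rw [eq_neg_iff_add_eq_zero, Finset.sum_erase_add _ _ (Finset.mem_univ _), sum_simplexVertex]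
  have := (convex_convexHull ℝ (vertexSet d)).sum_mem (t := Finset.univ.erase i)
    (w := fun _ => ((d : ℝ) - 1)⁻¹) (fun _ _ => inv_nonneg.2 (by linarith))
    (by rw [Finset.sum_const, nsmul_eq_mul, hcard, mul_inv_cancel₀ (by linarith)])
    (fun j _ => subset_convexHull ℝ _ (Or.inl ⟨j, rfl⟩))
  rwa [← Finset.smul_sum, hsum, smul_neg, ← neg_smul] at this

theorem not_isExtreme_segment_apex (hd : 2 ≤ d) :
    ¬ IsExtreme ℝ (convexHull ℝ (vertexSet d)) (segment ℝ (apex d) (-apex d)) := by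
  intro hext
  have hdR : (2 : ℝ) ≤ d := by exact_mod_cast hd
  have hd1 : (d : ℝ) - 1 ≠ 0 := by linarith
  set i₀ : Fin d := ⟨0, by omega⟩
  have h0 : (0 : Fin (d + 1) → ℝ) ∈
      openSegment ℝ (simplexVertex d i₀) (-((d : ℝ) - 1)⁻¹ • simplexVertex d i₀) := by
    refine ⟨1 / d, (d - 1) / d, by positivity, div_pos (by linarith) (by positivity),
      by field_simp; ring, ?_⟩
    rw [smul_smul, ← add_smul]
    convert zero_smul ℝ (simplexVertex d i₀)
    field_simp
    ring
  obtain ⟨a, b, -, -, -, hab⟩ := hext.2 (subset_convexHull ℝ _ (Or.inl ⟨i₀, rfl⟩))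
    (neg_inv_smul_simplexVertex_mem_convexHull hd i₀) zero_mem_segment_apex h0
  have hcoord : simplexVertex d i₀ i₀.castSucc = 0 := by
    rw [← hab]
    simp [apex_castSucc]
  rw [simplexVertex_castSucc, if_pos rfl] at hcoord
  linarith

theorem subequilateral_convexHull_vertexSet (hd : 2 ≤ d) :
    Subequilateral ℓ₁ (convexHull ℝ (vertexSet d)) := by
  rintro x y ⟨hxy, hext⟩
  have hx := hext.extremePoints_subset_extremePoints (left_mem_extremePoints_segment hxy)
  have hy := hext.extremePoints_subset_extremePoints
    (segment_symm ℝ x y ▸ left_mem_extremePoints_segment hxy.symm)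
  rw [extremePoints_convexHull_vertexSet hd] at hx hy
  rw [polyDiam_convexHull _ (isGreatest_l1_vertexSet hd)]
  refine l1_sub_of_mem_vertexSet (by omega) hx hy hxy fun hpair => not_isExtreme_segment_apex hd ?_
  rcases Set.pair_eq_pair_iff.1 hpair with ⟨rfl, rfl⟩ | ⟨rfl, rfl⟩
  · exact hext
  · rwa [segment_symm]

theorem headSum_apply (x : Fin (d + 1) → ℝ) : headSum d x = ∑ j : Fin d, x j.castSucc := by
  simp [headSum]

theorem vertexSet_subset_ker_headSum : vertexSet d ⊆ LinearMap.ker (headSum d) := by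
  rintro w (⟨i, rfl⟩ | rfl | rfl) <;>
    simp [headSum_apply, simplexVertex, apex_castSucc, Finset.sum_apply, Pi.single_apply]

theorem span_vertexSet (hd : 1 ≤ d) :
    Submodule.span ℝ (vertexSet d) = LinearMap.ker (headSum d) := by
  refine le_antisymm (Submodule.span_le.2 vertexSet_subset_ker_headSum) fun x hx => ?_
  rw [LinearMap.mem_ker, headSum_apply] at hx
  have hd0 : (d : ℝ) ≠ 0 := by positivity
  have hrep : x = ∑ j, (x j.castSucc / d) • simplexVertex d j + (x (Fin.last d) / 2) • apex d := by
    ext k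
    induction k using Fin.lastCases with
    | last => simp [simplexVertex_last, apex_last, Finset.sum_apply]
    | cast k =>
      have hterm : ∀ j, x j.castSucc / d * simplexVertex d j k.castSucc =
          (if k = j then x j.castSucc else 0) - x j.castSucc / d := by
        intro j
        rw [simplexVertex_castSucc]
        split_ifs
        · field_simp
        · ring
      simp only [Pi.add_apply, Finset.sum_apply, Pi.smul_apply, smul_eq_mul, apex_castSucc,
        mul_zero, add_zero, hterm, Finset.sum_sub_distrib, Finset.sum_ite_eq, Finset.mem_univ,
        if_true, ← Finset.sum_div, hx, zero_div, sub_zero]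
  rw [hrep]
  exact add_mem
    (sum_mem fun j _ => Submodule.smul_mem _ _ (Submodule.subset_span (Or.inl ⟨j, rfl⟩)))
    (Submodule.smul_mem _ _ (Submodule.subset_span (Or.inr (Or.inl rfl))))

theorem finrank_ker_headSum (hd : 1 ≤ d) : Module.finrank ℝ (LinearMap.ker (headSum d)) = d := by
  have hne : headSum d ≠ 0 := fun h => by
    simpa [headSum_apply, show d ≠ 0 by omega] using LinearMap.congr_fun h fun _ => 1
  have := Module.Dual.finrank_ker_add_one_of_ne_zero hne
  rw [Module.finrank_fin_fun] at this
  omega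

theorem finrank_direction_affineSpan_vertexSet (hd : 1 ≤ d) :
    Module.finrank ℝ (affineSpan ℝ (vertexSet d)).direction = d := by
  have h0 : (0 : Fin (d + 1) → ℝ) ∈ affineSpan ℝ (vertexSet d) :=
    convexHull_subset_affineSpan _ (segment_subset_convexHull (s := vertexSet d)
      (Or.inr (Or.inl rfl)) (Or.inr (Or.inr rfl)) zero_mem_segment_apex)
  rw [direction_affineSpan_of_zero_mem h0, span_vertexSet hd, finrank_ker_headSum hd]

end TalataL1

open TalataL1

/-- In the hyperplane `X = {x ∈ ℝ^{d+1} : Σ_{i=1}^d x_i = 0}` with the `ℓ_1`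
norm, the set `V = {d·e_i − c : i = 1,…,d} ∪ {±2e_{d+1}}` (where `c = Σ_{i=1}^d e_i`) is the
vertex set of a `d`-polytope `P`; all pairwise distances between distinct points of `V`
equal `2d` except the distance between `±2e_{d+1}`, which is `4`; `P` is subequilateral with
respect to the `ℓ_1` norm, and `λ(V; ‖·‖_1) = d/2`. -/
theorem talata_l1_example (d : ℕ) (hd : 2 ≤ d)
    (e : Fin (d + 1) → (Fin (d + 1) → ℝ)) (he : ∀ i, e i = Pi.single i 1)
    (l1 : (Fin (d + 1) → ℝ) → ℝ) (hl1 : ∀ x, l1 x = ∑ i, |x i|)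
    (c : Fin (d + 1) → ℝ) (hc : c = ∑ i : Fin d, e i.castSucc)
    (X : Set (Fin (d + 1) → ℝ)) (hX : X = {x | ∑ i : Fin d, x i.castSucc = 0})
    (V : Finset (Fin (d + 1) → ℝ))
    (hV : (V : Set (Fin (d + 1) → ℝ)) =
      Set.range (fun i : Fin d => (d : ℝ) • e i.castSucc - c) ∪
        {(2 : ℝ) • e (Fin.last d), -((2 : ℝ) • e (Fin.last d))})
    (P : Set (Fin (d + 1) → ℝ)) (hP : P = convexHull ℝ (V : Set (Fin (d + 1) → ℝ))) :
    (V : Set (Fin (d + 1) → ℝ)) ⊆ X ∧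
      Set.extremePoints ℝ P = (V : Set (Fin (d + 1) → ℝ)) ∧
      Module.finrank ℝ (affineSpan ℝ (V : Set (Fin (d + 1) → ℝ))).direction = d ∧
      l1 ((2 : ℝ) • e (Fin.last d) - -((2 : ℝ) • e (Fin.last d))) = 4 ∧
      (∀ x ∈ V, ∀ y ∈ V, x ≠ y →
        ({x, y} : Set (Fin (d + 1) → ℝ)) ≠
            {(2 : ℝ) • e (Fin.last d), -((2 : ℝ) • e (Fin.last d))} →
          l1 (x - y) = 2 * d) ∧
      Subequilateral l1 P ∧
      lamV l1 V = (d : ℝ) / 2 := by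
  obtain rfl : e = fun i => Pi.single i 1 := funext he
  obtain rfl : l1 = l1Seminorm (Fin (d + 1)) := funext hl1
  subst hc hX hP
  change (V : Set (Fin (d + 1) → ℝ)) = vertexSet d at hV
  have hd1 : 1 ≤ d := by omega
  refine ⟨hV ▸ fun x hx => (headSum_apply x).symm.trans (vertexSet_subset_ker_headSum hx),
    hV ▸ extremePoints_convexHull_vertexSet hd, hV ▸ finrank_direction_affineSpan_vertexSet hd1,
    l1_apex_sub_neg_apex, fun x hx y hy => l1_sub_of_mem_vertexSet hd1 (hV ▸ hx) (hV ▸ hy),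
    hV ▸ subequilateral_convexHull_vertexSet hd, ?_⟩
  have hmin : minPairDist (l1Seminorm (Fin (d + 1))) V = 4 := by
    have := isLeast_l1_vertexSet hd
    rw [← hV] at this
    exact this.csInf_eq
  rw [lamV, hmin, hV, polyDiam, (isGreatest_l1_vertexSet hd).csSup_eq]
  ring
end

section
/- Let ‖·‖ be a norm on ℝ^2 and let P be a 2-polytope (convex polygon) that is subequilateral with respect to ‖·‖. Then P is equilateral with respect to ‖·‖: the distance in ‖·‖ between any two distinct vertices of P equals the diameter of P. -/
/-
Let `u ≠ w` be vertices and `D` the diameter. If `[u, w]` is an edge there is nothing to prove.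
Otherwise the line `u w` has vertices strictly on both sides, so there are edges `[u, b₁]` and
`[w, b₂]` leaving it towards opposite sides, and `[b₁, b₂]` crosses `[u, w]` at some `m`.
The triangle inequality through `m` gives
`2 D = N (u - b₁) + N (w - b₂) ≤ N (u - w) + N (b₁ - b₂) ≤ N (u - w) + D`, so `N (u - w) = D`.
-/

open Pointwise

open Set Module AffineMap

section Norm

variable {E : Type*} [AddCommGroup E] [Module ℝ E] {N : E → ℝ}

theorem IsNorm.map_neg_s12 (hN : IsNorm N) (x : E) : N (-x) = N x := by
  simpa using hN.2.1 (-1) x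

theorem IsNorm.map_sub_rev (hN : IsNorm N) (x y : E) : N (x - y) = N (y - x) := by
  rw [← hN.map_neg_s12, neg_sub]

theorem IsNorm.map_sub_le_add (hN : IsNorm N) (x y z : E) : N (x - z) ≤ N (x - y) + N (y - z) := by
  simpa using hN.2.2 (x - y) (y - z)

theorem IsNorm.convexOn_s12 (hN : IsNorm N) : ConvexOn ℝ univ N := by
  refine ⟨convex_univ, fun x _ y _ a b ha hb _ => ?_⟩
  calc N (a • x + b • y) ≤ N (a • x) + N (b • y) := hN.2.2 _ _
    _ = a • N x + b • N y := by rw [hN.2.1, hN.2.1, abs_of_nonneg ha, abs_of_nonneg hb]; rfl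

theorem IsNorm.map_sub_add_map_sub_of_mem_segment (hN : IsNorm N) {x y m : E}
    (hm : m ∈ segment ℝ x y) : N (x - m) + N (m - y) = N (x - y) := by
  obtain ⟨a, b, ha, hb, hab, rfl⟩ := hm
  obtain rfl : a = 1 - b := by linarith
  have hxm : x - ((1 - b) • x + b • y) = b • (x - y) := by module
  have hmy : (1 - b) • x + b • y - y = (1 - b) • (x - y) := by module
  rw [hxm, hmy, hN.2.1, hN.2.1, abs_of_nonneg ha, abs_of_nonneg hb, ← add_mul, add_comm b, hab,
    one_mul]

/-- Opposite sides of a convex quadrilateral `u b₁ w b₂` are together no longer than its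
diagonals. -/
theorem IsNorm.add_le_add_of_mem_segment (hN : IsNorm N) {u w b₁ b₂ m : E}
    (hm : m ∈ segment ℝ u w) (hm' : m ∈ segment ℝ b₁ b₂) :
    N (u - b₁) + N (w - b₂) ≤ N (u - w) + N (b₁ - b₂) := by
  have h₁ := hN.map_sub_le_add u m b₁
  have h₂ := hN.map_sub_le_add w m b₂
  have h₃ := hN.map_sub_add_map_sub_of_mem_segment hm
  have h₄ := hN.map_sub_add_map_sub_of_mem_segment hm'
  rw [hN.map_sub_rev w m] at h₂
  rw [hN.map_sub_rev b₁ m] at h₄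
  linarith

theorem IsNorm.exists_le_of_mem_convexHull (hN : IsNorm N) {s : Set E} {x y : E}
    (hx : x ∈ convexHull ℝ s) (hy : y ∈ convexHull ℝ s) :
    ∃ a ∈ s, ∃ b ∈ s, N (x - y) ≤ N (a - b) := by
  have hconv (z : E) : ConvexOn ℝ univ fun x => N (x - z) := by
    simpa [Function.comp_def, neg_add_eq_sub] using hN.convexOn_s12.translate_right (-z)
  obtain ⟨a, ha, hxa⟩ := (hconv y).exists_ge_of_mem_convexHull (subset_univ _) hx
  obtain ⟨b, hb, hyb⟩ := (hconv a).exists_ge_of_mem_convexHull (subset_univ _) hy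
  exact ⟨b, hb, a, ha, hxa.trans (by rwa [hN.map_sub_rev])⟩

theorem IsNorm.le_polyDiam_convexHull (hN : IsNorm N) {s : Set E} (hs : s.Finite) {x y : E}
    (hx : x ∈ convexHull ℝ s) (hy : y ∈ convexHull ℝ s) :
    N (x - y) ≤ polyDiam N (convexHull ℝ s) := by
  obtain ⟨M, hM⟩ := ((hs.prod hs).image fun p : E × E => N (p.1 - p.2)).bddAbove
  refine le_csSup ⟨M, ?_⟩ ⟨x, hx, y, hy, rfl⟩
  rintro r ⟨x, hx, y, hy, rfl⟩
  obtain ⟨a, ha, b, hb, hab⟩ := hN.exists_le_of_mem_convexHull hx hy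
  exact hab.trans (hM ⟨(a, b), ⟨ha, hb⟩, rfl⟩)

end Norm

section Affine

variable {E : Type*} [AddCommGroup E] [Module ℝ E] {K : Set E} {u w : E} {s : ℝ}

theorem nonneg_of_lineMap_mem (hu : u ∈ K.extremePoints ℝ) (hw : w ∈ K) (huw : u ≠ w)
    (hs : lineMap u w s ∈ K) : 0 ≤ s := by
  by_contra! hs₀
  have hu' : u ∈ openSegment ℝ (lineMap u w s) w := by
    have h₀ : (0 : ℝ) ∈ openSegment ℝ s 1 := by
      rw [openSegment_eq_Ioo (hs₀.trans one_pos)]; exact ⟨hs₀, one_pos⟩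
    simpa [image_openSegment] using mem_image_of_mem (lineMap u w) h₀
  exact huw ((mem_extremePoints.1 hu).2 _ hs _ hw hu').2.symm

theorem lineMap_mem_segment_of_mem_extremePoints (hu : u ∈ K.extremePoints ℝ)
    (hw : w ∈ K.extremePoints ℝ) (huw : u ≠ w) (hs : lineMap u w s ∈ K) :
    lineMap u w s ∈ segment ℝ u w := by
  have h₀ := nonneg_of_lineMap_mem hu hw.1 huw hs
  have h₁ := nonneg_of_lineMap_mem hw hu.1 huw.symm (by rwa [lineMap_apply_one_sub])
  rw [segment_eq_image_lineMap]
  exact ⟨s, ⟨h₀, by linarith⟩, rfl⟩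

theorem exists_lineMap_eq_of_apply_eq (hE : finrank ℝ E = 2) {φ : E →ₗ[ℝ] ℝ} (hφ : φ ≠ 0)
    (huw : u ≠ w) (hφw : φ w = φ u) {x : E} (hφx : φ x = φ u) : ∃ s : ℝ, lineMap u w s = x := by
  have := Module.finite_of_finrank_eq_succ hE
  have hker : finrank ℝ (LinearMap.ker φ) = 1 := by
    have := Module.Dual.finrank_ker_add_one_of_ne_zero hφ
    omega
  have hwu : (⟨w - u, by simp [hφw]⟩ : LinearMap.ker φ) ≠ 0 := by
    simpa [sub_eq_zero] using huw.symm
  obtain ⟨s, hs⟩ := (finrank_eq_one_iff_of_nonzero' _ hwu).1 hker ⟨x - u, by simp [hφx]⟩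
  refine ⟨s, ?_⟩
  rw [lineMap_apply_module', ← eq_sub_iff_add_eq]
  exact congrArg Subtype.val hs

theorem mem_segment_of_apply_eq (hE : finrank ℝ E = 2) {φ : E →ₗ[ℝ] ℝ} (hφ : φ ≠ 0)
    (hu : u ∈ K.extremePoints ℝ) (hw : w ∈ K.extremePoints ℝ) (huw : u ≠ w) (hφw : φ w = φ u)
    {x : E} (hx : x ∈ K) (hφx : φ x = φ u) : x ∈ segment ℝ u w := by
  obtain ⟨s, rfl⟩ := exists_lineMap_eq_of_apply_eq hE hφ huw hφw hφx
  exact lineMap_mem_segment_of_mem_extremePoints hu hw huw hx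

theorem exists_ne_zero_apply_eq (hE : 1 < finrank ℝ E) (u w : E) :
    ∃ φ : E →ₗ[ℝ] ℝ, φ ≠ 0 ∧ φ w = φ u := by
  have hlt : ℝ ∙ (w - u) < ⊤ := by
    refine Submodule.lt_top_of_finrank_lt_finrank (lt_of_le_of_lt ?_ hE)
    simpa using finrank_span_le_card ({w - u} : Set E)
  obtain ⟨φ, hφ, hker⟩ := (ℝ ∙ (w - u)).exists_le_ker_of_lt_top hlt
  refine ⟨φ, hφ, ?_⟩
  have := hker (Submodule.mem_span_singleton_self (w - u))
  rwa [LinearMap.mem_ker, map_sub, sub_eq_zero] at this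

end Affine

/-- `f + t * g` is `f` rotated about `u` towards the side `g > g u` until its level line through `u`
hits a further point `u'` of `V`. -/
theorem exists_pos_forall_add_mul_le {α : Type*} {V : Set α} (hV : V.Finite) {f g : α → ℝ}
    {u v : α} (hf : ∀ x ∈ V, x ≠ u → f x < f u) (hv : v ∈ V) (hgv : g u < g v) :
    ∃ t > 0, ∃ u' ∈ V, g u < g u' ∧ f u' + t * g u' = f u + t * g u ∧
      ∀ x ∈ V, f x + t * g x ≤ f u + t * g u := by
  obtain ⟨u', ⟨hu'V, hgu'⟩, hmin⟩ :=
    {x ∈ V | g u < g x}.exists_min_image (fun x => (f u - f x) / (g x - g u))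
      (hV.subset (sep_subset _ _)) ⟨v, hv, hgv⟩
  have hfu' : f u' < f u := hf u' hu'V (fun h => by simp [h] at hgu')
  set t := (f u - f u') / (g u' - g u)
  have ht : t * (g u' - g u) = f u - f u' := div_mul_cancel₀ _ (by linarith)
  refine ⟨t, div_pos (by linarith) (by linarith), u', hu'V, hgu', by linarith, fun x hx => ?_⟩
  rcases le_or_gt (g x) (g u) with hgx | hgx
  · have hfx : f x ≤ f u := by
      rcases eq_or_ne x u with rfl | hxu
      · rfl
      · exact (hf x hx hxu).le
    nlinarith [div_pos (sub_pos.2 hfu') (sub_pos.2 hgu')]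
  · have := (le_div_iff₀ (by linarith)).1 (hmin x ⟨hx, hgx⟩)
    linarith

section Polygon

variable {E : Type*} [NormedAddCommGroup E] [NormedSpace ℝ E] {K V : Set E} {u w : E}

theorem isEdge_of_forall_le (hE : finrank ℝ E = 2) (hK : Convex ℝ K) {φ : StrongDual ℝ E}
    (hφ : φ ≠ 0) (hu : u ∈ K.extremePoints ℝ) (hw : w ∈ K.extremePoints ℝ) (huw : u ≠ w)
    (hφw : φ w = φ u) (hφK : ∀ x ∈ K, φ x ≤ φ u) : IsEdge K u w := by
  have hφ' : (φ : E →ₗ[ℝ] ℝ) ≠ 0 := by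
    rwa [ne_eq, ← ContinuousLinearMap.coe_inj, ContinuousLinearMap.toLinearMap_zero] at hφ
  have hface : φ.toExposed K = segment ℝ u w := by
    refine Subset.antisymm (fun x ⟨hx, hxmax⟩ => ?_) ?_
    · exact mem_segment_of_apply_eq hE hφ' hu hw huw hφw hx
        (le_antisymm (hφK x hx) (hxmax u hu.1))
    · exact (ContinuousLinearMap.toExposed.isExposed.convex hK).segment_subset
        ⟨hu.1, fun y hy => hφK y hy⟩ ⟨hw.1, fun y hy => hφw ▸ hφK y hy⟩
  exact ⟨huw, hface ▸ ContinuousLinearMap.toExposed.isExposed.isExtreme⟩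

theorem exists_isEdge_of_forall_le (hE : finrank ℝ E = 2) (hK : IsCompact K) (hK' : Convex ℝ K)
    {φ : StrongDual ℝ E} (hφ : φ ≠ 0) (hu : u ∈ K.extremePoints ℝ) (hw : w ∈ K) (huw : u ≠ w)
    (hφw : φ w = φ u) (hφK : ∀ x ∈ K, φ x ≤ φ u) : ∃ b, IsEdge K u b ∧ w ∈ segment ℝ u b := by
  have hφ' : (φ : E →ₗ[ℝ] ℝ) ≠ 0 := by
    rwa [ne_eq, ← ContinuousLinearMap.coe_inj, ContinuousLinearMap.toLinearMap_zero] at hφ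
  have hL : Topology.IsClosedEmbedding (lineMap u w : ℝ → E) := by
    have : (lineMap u w : ℝ → E) = (· + u) ∘ (· • (w - u)) := funext (lineMap_apply_module' u w)
    rw [this]
    exact (Homeomorph.addRight u).isClosedEmbedding.comp
      (isClosedEmbedding_smul_left (𝕜 := ℝ) (sub_ne_zero.2 huw.symm))
  -- `T` parametrises the chord of `K` on the line `u w`; its far end `b` closes the edge.
  set T := (lineMap u w : ℝ → E) ⁻¹' K
  have hT : IsCompact T := hL.isCompact_preimage hK
  have h1T : (1 : ℝ) ∈ T := by simpa [T] using hw
  set b := lineMap u w (sSup T)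
  have hb : b ∈ K := hT.sSup_mem ⟨1, h1T⟩
  have hτ : 1 ≤ sSup T := le_csSup hT.bddAbove h1T
  have hface : φ.toExposed K = segment ℝ u b := by
    refine Subset.antisymm (fun x ⟨hx, hxmax⟩ => ?_) ?_
    · obtain ⟨s, rfl⟩ := exists_lineMap_eq_of_apply_eq hE hφ' huw hφw
        (le_antisymm (hφK x hx) (hxmax u hu.1))
      have hseg : lineMap u w '' Icc 0 (sSup T) = segment ℝ u b := by
        rw [← segment_eq_Icc (by linarith), image_segment, lineMap_apply_zero]
      exact hseg ▸ ⟨s, ⟨nonneg_of_lineMap_mem hu hw huw hx, le_csSup hT.bddAbove hx⟩, rfl⟩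
    · have hφb : φ b = φ u := by
        simp [b, lineMap_apply_module', hφw]
      exact (ContinuousLinearMap.toExposed.isExposed.convex hK').segment_subset
        ⟨hu.1, fun y hy => hφK y hy⟩ ⟨hb, fun y hy => hφb ▸ hφK y hy⟩
  have hwseg : w ∈ segment ℝ u b := hface ▸ ⟨hw, fun y hy => hφw ▸ hφK y hy⟩
  refine ⟨b, ⟨fun hub => ?_, hface ▸ ContinuousLinearMap.toExposed.isExposed.isExtreme⟩, hwseg⟩
  rw [← hub, segment_same] at hwseg
  exact huw hwseg.symm

theorem exists_forall_lt_of_mem_extremePoints_convexHull (hV : V.Finite)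
    (hu : u ∈ (convexHull ℝ V).extremePoints ℝ) :
    ∃ f : StrongDual ℝ E, ∀ v ∈ V, v ≠ u → f v < f u := by
  have hsub : convexHull ℝ (V \ {u}) ⊆ convexHull ℝ V \ {u} :=
    convexHull_min (sdiff_subset_sdiff_left (subset_convexHull ℝ V))
      ((convex_convexHull ℝ V).mem_extremePoints_iff_convex_sdiff.1 hu).2
  obtain ⟨f, r, hf, hfu⟩ := geometric_hahn_banach_closed_point (convex_convexHull ℝ _)
    (hV.sdiff.isClosed_convexHull (𝕜 := ℝ)) fun h => (hsub h).2 rfl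
  exact ⟨f, fun v hv hvu => (hf v (subset_convexHull ℝ _ ⟨hv, hvu⟩)).trans hfu⟩

theorem exists_isEdge_of_lt (hE : finrank ℝ E = 2) (hV : V.Finite)
    (hu : u ∈ (convexHull ℝ V).extremePoints ℝ) (g : StrongDual ℝ E) {v₀ v : E} (hv₀ : v₀ ∈ V)
    (hv₀u : v₀ ≠ u) (hgv₀ : g v₀ ≤ g u) (hv : v ∈ V) (hgv : g u < g v) :
    ∃ b, IsEdge (convexHull ℝ V) u b ∧ g u < g b := by
  obtain ⟨f, hf⟩ := exists_forall_lt_of_mem_extremePoints_convexHull hV hu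
  obtain ⟨t, ht, u', hu', hgu', hφu', hφV⟩ := exists_pos_forall_add_mul_le hV hf hv hgv
  set φ := f + t • g
  have hφ (x : E) : φ x = f x + t * g x := rfl
  have hφK : ∀ x ∈ convexHull ℝ V, φ x ≤ φ u := by
    refine fun x hx => convexHull_min (fun y hy => ?_) ((convex_Iic (φ u)).linear_preimage
      (φ : E →ₗ[ℝ] ℝ)) hx
    simpa [hφ] using hφV y hy
  have hφ₀ : φ ≠ 0 := fun h0 => by
    have := hf v₀ hv₀ hv₀u
    have : φ v₀ = φ u := by simp [h0]
    rw [hφ, hφ] at this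
    nlinarith
  obtain ⟨b, hb, hu'b⟩ := exists_isEdge_of_forall_le hE (hV.isCompact_convexHull (𝕜 := ℝ))
    (convex_convexHull ℝ V) hφ₀ hu (subset_convexHull ℝ V hu') (fun h => by simp [h] at hgu')
    (by rw [hφ, hφ, hφu']) hφK
  refine ⟨b, hb, lt_of_not_ge fun hgb => hgu'.not_ge ?_⟩
  exact (convex_Iic (g u)).linear_preimage (g : E →ₗ[ℝ] ℝ) |>.segment_subset
    (show g u ≤ g u from le_rfl) hgb hu'b

theorem isEdge_or_exists_isEdge_isEdge_crossing (hE : finrank ℝ E = 2) (hV : V.Finite)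
    (hu : u ∈ (convexHull ℝ V).extremePoints ℝ) (hw : w ∈ (convexHull ℝ V).extremePoints ℝ)
    (huw : u ≠ w) :
    IsEdge (convexHull ℝ V) u w ∨ ∃ b₁ b₂, IsEdge (convexHull ℝ V) u b₁ ∧
      IsEdge (convexHull ℝ V) w b₂ ∧ ∃ m ∈ segment ℝ u w, m ∈ segment ℝ b₁ b₂ := by
  have := Module.finite_of_finrank_eq_succ hE
  obtain ⟨g, hg, hgw⟩ := exists_ne_zero_apply_eq (by omega) u w
  set g' : StrongDual ℝ E := LinearMap.toContinuousLinearMap g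
  have hg' : g' ≠ 0 := by simpa [g'] using hg
  have huV : u ∈ V := extremePoints_convexHull_subset hu
  have hwV : w ∈ V := extremePoints_convexHull_subset hw
  have hK := convex_convexHull ℝ V
  by_cases hA : ∃ v ∈ V, g u < g v
  swap
  · push Not at hA
    exact .inl (isEdge_of_forall_le hE hK hg' hu hw huw hgw
      fun x hx => convexHull_min hA ((convex_Iic _).linear_preimage g) hx)
  by_cases hB : ∃ v ∈ V, g v < g u
  swap
  · push Not at hB
    refine .inl (isEdge_of_forall_le hE hK (neg_ne_zero.2 hg') hu hw huw (by simp [g', hgw])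
      fun x hx => ?_)
    have : g u ≤ g x := convexHull_min hB ((convex_Ici _).linear_preimage g) hx
    simpa [g'] using this
  obtain ⟨v₁, hv₁, hgv₁⟩ := hA
  obtain ⟨v₂, hv₂, hgv₂⟩ := hB
  obtain ⟨b₁, hb₁, hgb₁⟩ := exists_isEdge_of_lt hE hV hu g' hwV huw.symm hgw.le hv₁ hgv₁
  obtain ⟨b₂, hb₂, hgb₂⟩ := exists_isEdge_of_lt hE hV hw (-g') huV huw
    (by simp [g', hgw]) hv₂ (by simpa [g', hgw])
  obtain ⟨m, hm, hgm⟩ : g u ∈ g '' segment ℝ b₁ b₂ := by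
    simp only [g', LinearMap.coe_toContinuousLinearMap', neg_apply, hgw,
      neg_lt_neg_iff] at hgb₁ hgb₂
    rw [← LinearMap.coe_toAffineMap, image_segment, segment_symm]
    exact segment_eq_Icc (hgb₂.trans hgb₁).le ▸ ⟨hgb₂.le, hgb₁.le⟩
  refine .inr ⟨b₁, b₂, hb₁, hb₂, m, ?_, hm⟩
  have hmK : m ∈ convexHull ℝ V :=
    hK.segment_subset (hb₁.2.1 (right_mem_segment ℝ u b₁)) (hb₂.2.1 (right_mem_segment ℝ w b₂)) hm
  exact mem_segment_of_apply_eq hE hg hu hw huw hgw hmK hgm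

end Polygon

theorem subequilateral_equilateral_dim_two_general
    (N : (Fin 2 → ℝ) → ℝ) (hN : IsNorm N)
    (V : Finset (Fin 2 → ℝ)) (P : Set (Fin 2 → ℝ))
    (hP : P = convexHull ℝ (V : Set (Fin 2 → ℝ)))
    (hsub : Subequilateral N P) :
    ∀ x ∈ Set.extremePoints ℝ P, ∀ y ∈ Set.extremePoints ℝ P, x ≠ y →
      N (x - y) = polyDiam N P := by
  intro u hu w hw huw
  subst hP
  have hle {x y} (hx : x ∈ convexHull ℝ (V : Set (Fin 2 → ℝ)))
      (hy : y ∈ convexHull ℝ (V : Set (Fin 2 → ℝ))) :=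
    hN.le_polyDiam_convexHull V.finite_toSet hx hy
  rcases isEdge_or_exists_isEdge_isEdge_crossing (by simp) V.finite_toSet hu hw huw with
    huw_edge | ⟨b₁, b₂, hb₁, hb₂, m, hm, hm'⟩
  · exact hsub u w huw_edge
  · have hquad := hN.add_le_add_of_mem_segment hm hm'
    rw [hsub u b₁ hb₁, hsub w b₂ hb₂] at hquad
    have hb₁₂ := hle (hb₁.2.1 (right_mem_segment ℝ u b₁)) (hb₂.2.1 (right_mem_segment ℝ w b₂))
    linarith [hle hu.1 hw.1]

/-- A 2-polytope in `ℝ^2` that is subequilateral with respect to a norm `N`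
is equilateral: the distance between any two distinct vertices equals the diameter. -/
theorem subequilateral_equilateral_dim_two
    (N : (Fin 2 → ℝ) → ℝ) (hN : IsNorm N)
    (V : Finset (Fin 2 → ℝ)) (P : Set (Fin 2 → ℝ))
    (hP : P = convexHull ℝ (V : Set (Fin 2 → ℝ)))
    (hdim : affineSpan ℝ P = ⊤)
    (hsub : Subequilateral N P) :
    ∀ x ∈ Set.extremePoints ℝ P, ∀ y ∈ Set.extremePoints ℝ P, x ≠ y →
      N (x - y) = polyDiam N P :=
  subequilateral_equilateral_dim_two_general N hN V P hP hsub
end
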